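/- arXiv:2410.23376 — 9 statements merged into one kernel-verified Lean document; each statement's English description precedes it below -/
import Mathlib

section
/- The supremum of the set {x : ℝ | ∃ R an 8×8 PSD matrix with Tr₂R = I₄ and x = Re(trace(R·D))} equals the supremum of the set {x : ℝ | ∃ A B : Matrix (Fin 2) (Fin 2) ℂ, A PSD ∧ B PSD ∧ (I₂ − A − B) PSD ∧ x = Re(⟨u|A|u⟩ + ⟨v|B|v⟩)}. (Proposition 2 of the paper, approximate deterministic case: optimization of the retrieval over Choi operators is equivalent to a two-state minimum-error discrimination problem.) -/
open Matrix Kronecker Complex Filter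
open scoped ComplexOrder

noncomputable section

/-- Outer product `v vᴴ`. -/
def outer {ι : Type*} [Fintype ι] (v : ι → ℂ) : Matrix ι ι ℂ :=
  Matrix.vecMulVec v (star v)

/-- The conjugated memory states `ψ*₀ = (e^{-inα}, e^{inα})/√2`, `ψ*₁ = (e^{inα}, e^{-inα})/√2`. -/
def psiStar (n : ℕ) (α : ℝ) (i : Fin 2) : Fin 2 → ℂ :=
  if i = 0 then
    ((Real.sqrt 2 : ℂ))⁻¹ • ![Complex.exp (-(Complex.I * n * α)), Complex.exp (Complex.I * n * α)]
  else
    ((Real.sqrt 2 : ℂ))⁻¹ • ![Complex.exp (Complex.I * n * α), Complex.exp (-(Complex.I * n * α))]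

/-- `|U⟩⟩ = (e^{iε},0,0,e^{-iε})` in `ℂ^{Fin 2 × Fin 2}`. -/
def Uket (ε : ℝ) : Fin 2 × Fin 2 → ℂ := fun p =>
  if p = (0, 0) then Complex.exp (Complex.I * ε)
  else if p = (1, 1) then Complex.exp (-(Complex.I * ε)) else 0

/-- `|U₀⟩⟩` and `|U₁⟩⟩`. -/
def Ui (α : ℝ) (i : Fin 2) : Fin 2 × Fin 2 → ℂ :=
  if i = 0 then Uket α else Uket (-α)

/-- The performance operator `D = (1/8) ∑ᵢ (ψ*ᵢ ψ*ᵢᴴ) ⊗ₖ |Uᵢ⟩⟩⟨⟨Uᵢ|`. -/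
def Dop (n : ℕ) (α : ℝ) : Matrix (Fin 2 × Fin 2 × Fin 2) (Fin 2 × Fin 2 × Fin 2) ℂ :=
  (1/8 : ℂ) • ∑ i : Fin 2, (outer (psiStar n α i)) ⊗ₖ (outer (Ui α i))

/-- Partial trace over the third (output) factor `H₂`. -/
def ptr2 (R : Matrix (Fin 2 × Fin 2 × Fin 2) (Fin 2 × Fin 2 × Fin 2) ℂ) :
    Matrix (Fin 2 × Fin 2) (Fin 2 × Fin 2) ℂ :=
  Matrix.of fun p q => ∑ k : Fin 2, R (p.1, p.2, k) (q.1, q.2, k)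

/-- The vector `u = (cₙ·c, sₙ·s)`. -/
def uvec (n : ℕ) (α : ℝ) : Fin 2 → ℂ :=
  ![((Real.cos (n * α) * Real.cos α : ℝ) : ℂ), ((Real.sin (n * α) * Real.sin α : ℝ) : ℂ)]

/-- The vector `v = (cₙ·s, -sₙ·c)`. -/
def vvec (n : ℕ) (α : ℝ) : Fin 2 → ℂ :=
  ![((Real.cos (n * α) * Real.sin α : ℝ) : ℂ), ((-(Real.sin (n * α) * Real.cos α) : ℝ) : ℂ)]

/-- `⟨w|A|w⟩ = star w ⬝ᵥ A.mulVec w`. -/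
def brk (w : Fin 2 → ℂ) (A : Matrix (Fin 2) (Fin 2) ℂ) : ℂ :=
  star w ⬝ᵥ A.mulVec w

/-!
Summed over `i`, the two terms of `D` are `|c⟩⟨c|/16` and `|c̄⟩⟨c̄|/16` for `c = ψ̃₀ ⊗ |U₀⟩⟩`
(the second memory state and gate are the complex conjugates of the first), so
`8 D = |Re c⟩⟨Re c| + |Im c⟩⟨Im c|`. By the angle-addition formulas `Re c = K_Aᴴ u` and
`Im c = K_Bᴴ v` for two `2 × 8` matrices `K_A, K_B` with orthogonal rows, hence
`Tr (R D) = ⟨u|A|u⟩ + ⟨v|B|v⟩` with `A = K_A R K_Aᴴ / 8` and `B = K_B R K_Bᴴ / 8`.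
Completing the rows of `K_A, K_B` by those of `J₀, J₁` to an orthogonal basis of `ℂ⁸` shows that
`Tr₂ R = 1` forces `1 - A - B = (J₀ R J₀ᴴ + J₁ R J₁ᴴ) / 4 ⪰ 0`; conversely every admissible pair
`(A, B)` is obtained from an explicit Choi operator. So the two sets of values coincide.
-/

section Outer

variable {ι κ : Type*} [Fintype ι] [Fintype κ]

lemma outer_smul (a : ℂ) (v : ι → ℂ) : outer (a • v) = (a * star a) • outer v := by
  ext i j
  simp only [outer, vecMulVec_apply, Pi.smul_apply, Pi.star_apply, star_smul, smul_eq_mul,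
    Matrix.smul_apply]
  ring

lemma outer_mul_kronecker (w : ι → ℂ) (z : κ → ℂ) :
    outer (fun p : ι × κ => w p.1 * z p.2) = outer w ⊗ₖ outer z := by
  ext ⟨a, b⟩ ⟨c, d⟩
  simp only [outer, vecMulVec_apply, Pi.star_apply, star_mul', kroneckerMap_apply]
  ring

lemma mul_outer_mul_conjTranspose (M : Matrix κ ι ℂ) (v : ι → ℂ) :
    M * outer v * Mᴴ = outer (M *ᵥ v) := by
  rw [outer, outer, mul_vecMulVec, vecMulVec_mul, star_mulVec]

lemma outer_add_outer_star (v : ι → ℂ) :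
    outer v + outer (star v) =
      (2 : ℂ) • (outer (fun i => ((v i).re : ℂ)) + outer (fun i => ((v i).im : ℂ))) := by
  ext i j
  simp only [outer, Matrix.add_apply, Matrix.smul_apply, vecMulVec_apply, Pi.star_apply,
    star_star, smul_eq_mul, Complex.star_def, Complex.conj_ofReal]
  apply Complex.ext <;>
    simp only [add_re, add_im, mul_re, mul_im, conj_re, conj_im, re_ofNat, im_ofNat, ofReal_re,
      ofReal_im, mul_zero, zero_mul, sub_zero, add_zero, mul_neg, neg_mul, sub_neg_eq_add] <;>
    ring

lemma outer_inv_sqrt_two_smul (v : ι → ℂ) :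
    outer (((Real.sqrt 2 : ℂ))⁻¹ • v) = (1/2 : ℂ) • outer v := by
  rw [outer_smul, ← Complex.ofReal_inv, Complex.star_def, Complex.conj_ofReal, ← Complex.ofReal_mul,
    ← mul_inv, Real.mul_self_sqrt zero_le_two]
  norm_num

end Outer

lemma trace_mul_mul_mul_mul_rotate {m P α : Type*} [Fintype m] [Fintype P] [CommSemiring α]
    (R : Matrix P P α) (L : Matrix P m α) (M : Matrix m m α) (K : Matrix m P α) :
    (R * (L * M * K)).trace = (K * R * L * M).trace := by
  rw [← Matrix.mul_assoc, ← Matrix.mul_assoc, trace_mul_comm]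
  simp only [Matrix.mul_assoc]

lemma mul_conjTranspose_mul_mul_mul_conjTranspose {m P α : Type*} [Fintype m] [Fintype P]
    [Semiring α] [StarRing α] (K L : Matrix m P α) (M : Matrix m m α) :
    K * (Lᴴ * M * L) * Kᴴ = K * Lᴴ * M * (K * Lᴴ)ᴴ := by
  simp only [conjTranspose_mul, conjTranspose_conjTranspose, Matrix.mul_assoc]

def phase (n : ℕ) (α : ℝ) : Fin 2 → ℂ :=
  ![Complex.exp (-(Complex.I * n * α)), Complex.exp (Complex.I * n * α)]

lemma star_phase (n : ℕ) (α : ℝ) :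
    star (phase n α) = ![Complex.exp (Complex.I * n * α), Complex.exp (-(Complex.I * n * α))] := by
  ext i
  fin_cases i <;> simp [phase, ← Complex.exp_conj, Complex.conj_ofReal]

lemma psiStar_zero (n : ℕ) (α : ℝ) : psiStar n α 0 = ((Real.sqrt 2 : ℂ))⁻¹ • phase n α := rfl

lemma psiStar_one (n : ℕ) (α : ℝ) :
    psiStar n α 1 = ((Real.sqrt 2 : ℂ))⁻¹ • star (phase n α) := by
  rw [star_phase]; rfl

lemma Uket_neg (ε : ℝ) : Uket (-ε) = star (Uket ε) := by
  ext p
  simp only [Uket, Pi.star_apply]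
  split_ifs <;> simp [← Complex.exp_conj, Complex.conj_ofReal]

def jointVec (n : ℕ) (α : ℝ) : Fin 2 × Fin 2 × Fin 2 → ℂ := fun p => phase n α p.1 * Uket α p.2

lemma Dop_eq_outer_add_outer_star (n : ℕ) (α : ℝ) :
    Dop n α = (1/16 : ℂ) • (outer (jointVec n α) + outer (star (jointVec n α))) := by
  have hstar : star (jointVec n α) = fun p => star (phase n α) p.1 * Uket (-α) p.2 := by
    ext p; simp [jointVec, Uket_neg]
  rw [hstar]
  unfold jointVec
  rw [outer_mul_kronecker, outer_mul_kronecker, Dop, Fin.sum_univ_two,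
    psiStar_zero, psiStar_one, outer_inv_sqrt_two_smul, outer_inv_sqrt_two_smul]
  simp only [Ui, if_pos, one_ne_zero, if_false, smul_kronecker, smul_smul, ← smul_add]
  norm_num

def sgn (a : Fin 2) : ℂ := if a = 0 then 1 else -1

-- The rows of `KA/2, KB/2, J0/√2, J1/√2` form an orthonormal basis of `ℂ⁸`.
def KA : Matrix (Fin 2) (Fin 2 × Fin 2 × Fin 2) ℂ :=
  Matrix.of fun i p => if p.2.2 = p.2.1 then ![1, sgn p.1 * sgn p.2.1] i else 0

def KB : Matrix (Fin 2) (Fin 2 × Fin 2 × Fin 2) ℂ :=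
  Matrix.of fun i p => if p.2.2 = p.2.1 then ![sgn p.2.1, sgn p.1] i else 0

def J0 : Matrix (Fin 2) (Fin 2 × Fin 2 × Fin 2) ℂ :=
  Matrix.of fun i p => if p.2.1 = 0 ∧ p.2.2 = 1 then ![1, sgn p.1] i else 0

def J1 : Matrix (Fin 2) (Fin 2 × Fin 2 × Fin 2) ℂ :=
  Matrix.of fun i p => if p.2.1 = 1 ∧ p.2.2 = 0 then ![1, -sgn p.1] i else 0

lemma KA_mul_conjTranspose_KA : KA * KAᴴ = (4 : ℂ) • 1 := by
  ext i j; fin_cases i <;> fin_cases j <;>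
    norm_num [KA, sgn, mul_apply, Fintype.sum_prod_type]

lemma KB_mul_conjTranspose_KB : KB * KBᴴ = (4 : ℂ) • 1 := by
  ext i j; fin_cases i <;> fin_cases j <;>
    norm_num [KB, sgn, mul_apply, Fintype.sum_prod_type]

lemma KA_mul_conjTranspose_KB : KA * KBᴴ = 0 := by
  ext i j; fin_cases i <;> fin_cases j <;> simp [KA, KB, sgn, mul_apply, Fintype.sum_prod_type]

lemma KB_mul_conjTranspose_KA : KB * KAᴴ = 0 := by
  ext i j; fin_cases i <;> fin_cases j <;> simp [KA, KB, sgn, mul_apply, Fintype.sum_prod_type]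

lemma KA_mul_conjTranspose_J0 : KA * J0ᴴ = 0 := by
  ext i j; fin_cases i <;> fin_cases j <;> simp [KA, J0, sgn, mul_apply, Fintype.sum_prod_type]

lemma KA_mul_conjTranspose_J1 : KA * J1ᴴ = 0 := by
  ext i j; fin_cases i <;> fin_cases j <;> simp [KA, J1, sgn, mul_apply, Fintype.sum_prod_type]

lemma KB_mul_conjTranspose_J0 : KB * J0ᴴ = 0 := by
  ext i j; fin_cases i <;> fin_cases j <;> simp [KB, J0, sgn, mul_apply, Fintype.sum_prod_type]

lemma KB_mul_conjTranspose_J1 : KB * J1ᴴ = 0 := by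
  ext i j; fin_cases i <;> fin_cases j <;> simp [KB, J1, sgn, mul_apply, Fintype.sum_prod_type]

-- Entrywise, the addition formulas for `cos ((n ∓ 1) α)` and `sin ((n ∓ 1) α)`.
lemma re_jointVec (n : ℕ) (α : ℝ) :
    (fun p => ((jointVec n α p).re : ℂ)) = KAᴴ *ᵥ uvec n α := by
  ext ⟨a, b, k⟩
  fin_cases a <;> fin_cases b <;> fin_cases k <;>
    simp [jointVec, phase, Uket, KA, sgn, uvec, mulVec, dotProduct, Fin.sum_univ_two,
      Complex.exp_re, Complex.exp_im, Complex.mul_re, Complex.mul_im] <;> ring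

lemma im_jointVec (n : ℕ) (α : ℝ) :
    (fun p => ((jointVec n α p).im : ℂ)) = KBᴴ *ᵥ vvec n α := by
  ext ⟨a, b, k⟩
  fin_cases a <;> fin_cases b <;> fin_cases k <;>
    simp [jointVec, phase, Uket, KB, sgn, vvec, mulVec, dotProduct, Fin.sum_univ_two,
      Complex.exp_re, Complex.exp_im, Complex.mul_re, Complex.mul_im]

lemma Dop_eq (n : ℕ) (α : ℝ) :
    Dop n α = (1/8 : ℂ) • (KAᴴ * outer (uvec n α) * KA + KBᴴ * outer (vvec n α) * KB) := by
  have hA := mul_outer_mul_conjTranspose KAᴴ (uvec n α)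
  have hB := mul_outer_mul_conjTranspose KBᴴ (vvec n α)
  rw [conjTranspose_conjTranspose] at hA hB
  rw [hA, hB, ← re_jointVec, ← im_jointVec, Dop_eq_outer_add_outer_star, outer_add_outer_star,
    smul_smul]
  norm_num

lemma brk_eq_trace (w : Fin 2 → ℂ) (M : Matrix (Fin 2) (Fin 2) ℂ) :
    brk w M = (M * outer w).trace := by
  rw [brk, outer, mul_vecMulVec, trace_vecMulVec, dotProduct_comm]

def effectA (R : Matrix (Fin 2 × Fin 2 × Fin 2) (Fin 2 × Fin 2 × Fin 2) ℂ) :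
    Matrix (Fin 2) (Fin 2) ℂ :=
  (1/8 : ℂ) • (KA * R * KAᴴ)

def effectB (R : Matrix (Fin 2 × Fin 2 × Fin 2) (Fin 2 × Fin 2 × Fin 2) ℂ) :
    Matrix (Fin 2) (Fin 2) ℂ :=
  (1/8 : ℂ) • (KB * R * KBᴴ)

lemma posSemidef_effectA {R : Matrix (Fin 2 × Fin 2 × Fin 2) (Fin 2 × Fin 2 × Fin 2) ℂ}
    (hR : R.PosSemidef) : (effectA R).PosSemidef :=
  (hR.mul_mul_conjTranspose_same KA).smul (by positivity)

lemma posSemidef_effectB {R : Matrix (Fin 2 × Fin 2 × Fin 2) (Fin 2 × Fin 2 × Fin 2) ℂ}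
    (hR : R.PosSemidef) : (effectB R).PosSemidef :=
  (hR.mul_mul_conjTranspose_same KB).smul (by positivity)

lemma trace_mul_Dop (n : ℕ) (α : ℝ)
    (R : Matrix (Fin 2 × Fin 2 × Fin 2) (Fin 2 × Fin 2 × Fin 2) ℂ) :
    (R * Dop n α).trace = brk (uvec n α) (effectA R) + brk (vvec n α) (effectB R) := by
  rw [Dop_eq, Matrix.mul_smul, Matrix.mul_add, trace_smul, trace_add,
    trace_mul_mul_mul_mul_rotate, trace_mul_mul_mul_mul_rotate, brk_eq_trace, brk_eq_trace,
    effectA, effectB, Matrix.smul_mul, Matrix.smul_mul, trace_smul, trace_smul, smul_add]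

def E0 : Matrix (Fin 2) (Fin 2 × Fin 2) ℂ :=
  Matrix.of fun i p => if p.2 = 0 then ![1, sgn p.1] i else 0

def E1 : Matrix (Fin 2) (Fin 2 × Fin 2) ℂ :=
  Matrix.of fun i p => if p.2 = 1 then ![1, -sgn p.1] i else 0

lemma effectA_add_effectB_add (R : Matrix (Fin 2 × Fin 2 × Fin 2) (Fin 2 × Fin 2 × Fin 2) ℂ) :
    effectA R + effectB R + (1/4 : ℂ) • (J0 * R * J0ᴴ + J1 * R * J1ᴴ) =
      (1/4 : ℂ) • (E0 * ptr2 R * E0ᴴ + E1 * ptr2 R * E1ᴴ) := by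
  ext i j
  fin_cases i <;> fin_cases j <;>
    simp [effectA, effectB, KA, KB, J0, J1, E0, E1, sgn, ptr2, mul_apply, Fintype.sum_prod_type,
      Fin.sum_univ_two] <;>
    ring

lemma E0_mul_add_E1_mul : E0 * E0ᴴ + E1 * E1ᴴ = (4 : ℂ) • 1 := by
  ext i j
  fin_cases i <;> fin_cases j <;> norm_num [E0, E1, sgn, mul_apply, Fintype.sum_prod_type]

lemma one_sub_effectA_sub_effectB {R : Matrix (Fin 2 × Fin 2 × Fin 2) (Fin 2 × Fin 2 × Fin 2) ℂ}
    (hR : ptr2 R = 1) :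
    1 - effectA R - effectB R = (1/4 : ℂ) • (J0 * R * J0ᴴ + J1 * R * J1ᴴ) := by
  have h := effectA_add_effectB_add R
  rw [hR, Matrix.mul_one, Matrix.mul_one, E0_mul_add_E1_mul, smul_smul,
    show (1/4 : ℂ) * 4 = 1 by norm_num, one_smul] at h
  rw [← h]
  abel

lemma posSemidef_one_sub_effectA_sub_effectB
    {R : Matrix (Fin 2 × Fin 2 × Fin 2) (Fin 2 × Fin 2 × Fin 2) ℂ} (hR : R.PosSemidef)
    (hR1 : ptr2 R = 1) : (1 - effectA R - effectB R).PosSemidef := by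
  rw [one_sub_effectA_sub_effectB hR1]
  exact ((hR.mul_mul_conjTranspose_same J0).add (hR.mul_mul_conjTranspose_same J1)).smul
    (by positivity)

def choiOfEffects (A B : Matrix (Fin 2) (Fin 2) ℂ) :
    Matrix (Fin 2 × Fin 2 × Fin 2) (Fin 2 × Fin 2 × Fin 2) ℂ :=
  (1/2 : ℂ) • (KAᴴ * A * KA + KBᴴ * B * KB + J0ᴴ * (1 - A - B) * J0 + J1ᴴ * (1 - A - B) * J1)

lemma ptr2_choiOfEffects (A B : Matrix (Fin 2) (Fin 2) ℂ) : ptr2 (choiOfEffects A B) = 1 := by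
  ext ⟨a, b⟩ ⟨a', b'⟩
  fin_cases a <;> fin_cases b <;> fin_cases a' <;> fin_cases b' <;>
    simp [choiOfEffects, ptr2, KA, KB, J0, J1, sgn, mul_apply, Fin.sum_univ_two, one_apply] <;>
    ring

lemma posSemidef_choiOfEffects {A B : Matrix (Fin 2) (Fin 2) ℂ} (hA : A.PosSemidef)
    (hB : B.PosSemidef) (hAB : (1 - A - B).PosSemidef) : (choiOfEffects A B).PosSemidef :=
  ((((hA.conjTranspose_mul_mul_same KA).add (hB.conjTranspose_mul_mul_same KB)).add
    (hAB.conjTranspose_mul_mul_same J0)).add (hAB.conjTranspose_mul_mul_same J1)).smul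
    (by positivity)

lemma effectA_choiOfEffects (A B : Matrix (Fin 2) (Fin 2) ℂ) :
    effectA (choiOfEffects A B) = A := by
  simp only [effectA, choiOfEffects, Matrix.mul_smul, Matrix.smul_mul, Matrix.mul_add,
    Matrix.add_mul, mul_conjTranspose_mul_mul_mul_conjTranspose, KA_mul_conjTranspose_KA,
    KA_mul_conjTranspose_KB, KA_mul_conjTranspose_J0, KA_mul_conjTranspose_J1,
    conjTranspose_smul, conjTranspose_one, Matrix.zero_mul, add_zero,
    Matrix.one_mul, Matrix.mul_one, smul_smul]
  norm_num

lemma effectB_choiOfEffects (A B : Matrix (Fin 2) (Fin 2) ℂ) :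
    effectB (choiOfEffects A B) = B := by
  simp only [effectB, choiOfEffects, Matrix.mul_smul, Matrix.smul_mul, Matrix.mul_add,
    Matrix.add_mul, mul_conjTranspose_mul_mul_mul_conjTranspose, KB_mul_conjTranspose_KB,
    KB_mul_conjTranspose_KA, KB_mul_conjTranspose_J0, KB_mul_conjTranspose_J1,
    conjTranspose_smul, conjTranspose_one, Matrix.zero_mul, add_zero, zero_add,
    Matrix.one_mul, Matrix.mul_one, smul_smul]
  norm_num

theorem deterministic_retrieval_as_discrimination_general (n : ℕ) (α : ℝ) :
    sSup {x : ℝ | ∃ R : Matrix (Fin 2 × Fin 2 × Fin 2) (Fin 2 × Fin 2 × Fin 2) ℂ,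
        R.PosSemidef ∧ ptr2 R = 1 ∧ x = ((R * Dop n α).trace).re}
    = sSup {x : ℝ | ∃ A B : Matrix (Fin 2) (Fin 2) ℂ,
        A.PosSemidef ∧ B.PosSemidef ∧ (1 - A - B).PosSemidef ∧
        x = (brk (uvec n α) A + brk (vvec n α) B).re} := by
  congr 1
  ext x
  constructor
  · rintro ⟨R, hR, hR1, rfl⟩
    exact ⟨effectA R, effectB R, posSemidef_effectA hR, posSemidef_effectB hR,
      posSemidef_one_sub_effectA_sub_effectB hR hR1, by rw [trace_mul_Dop]⟩
  · rintro ⟨A, B, hA, hB, hAB, rfl⟩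
    exact ⟨choiOfEffects A B, posSemidef_choiOfEffects hA hB hAB, ptr2_choiOfEffects A B, by
      rw [trace_mul_Dop, effectA_choiOfEffects, effectB_choiOfEffects]⟩

theorem deterministic_retrieval_as_discrimination (n : ℕ) (hn : 1 ≤ n) (α : ℝ) (hα : 0 < α)
    (hdist : 4 * n * α < Real.pi) :
    sSup {x : ℝ | ∃ R : Matrix (Fin 2 × Fin 2 × Fin 2) (Fin 2 × Fin 2 × Fin 2) ℂ,
        R.PosSemidef ∧ ptr2 R = 1 ∧ x = ((R * Dop n α).trace).re}
    = sSup {x : ℝ | ∃ A B : Matrix (Fin 2) (Fin 2) ℂ,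
        A.PosSemidef ∧ B.PosSemidef ∧ (1 - A - B).PosSemidef ∧
        x = (brk (uvec n α) A + brk (vvec n α) B).re} :=
  deterministic_retrieval_as_discrimination_general n α
end
end

section
/- Assume moreover cos(2nα)·(cos(2α) + sin(2α)) ≥ 1 (the small-α regime). Then (1 − cos(2nα)²)/(2·(1 − cos(2nα)·cos(2α))) is the greatest element of the set {x : ℝ | ∃ A B : Matrix (Fin 2) (Fin 2) ℂ, A PSD ∧ B PSD ∧ (I₂ − A − B) PSD ∧ ⟨v|A|v⟩ = 0 ∧ ⟨u|B|u⟩ = 0 ∧ x = Re(⟨u|A|u⟩ + ⟨v|B|v⟩)}. (The small-α branch of Eq. (23): optimal success probability of perfect probabilistic storage and retrieval of two unitaries.) -/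
/-!
Put `w = (sₙ·c, cₙ·s)`, so that `v` is the rotation of `w` by a right angle, and let
`Q = ‖w‖² = ‖v‖²`, `k = ⟨w|u⟩ = sₙ·cₙ`, `R = ⟨v|u⟩`; then `Q • u = k • w + R • v`.
The constraint `⟨v|A|v⟩ = 0` forces `A v = 0`, hence `Q²⟨u|A|u⟩ = k²⟨w|A|w⟩`; likewise `B u = 0`
gives `R²⟨v|B|v⟩ = k²⟨w|B|w⟩`. Since `⟨w|A + B|w⟩ ≤ Q` and the small-α condition says exactly
`Q ≤ R`, the success probability is at most `k²/Q`, which `A = |w⟩⟨w|/Q`, `B = 0` attains.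
-/

open Matrix Kronecker Complex Filter
open scoped ComplexOrder

noncomputable section

section Perp

variable {R : Type*} [CommRing R] [StarRing R]

/-- Rotation by a right angle, conjugated so that `perpVec e` is orthogonal to `e`. -/
def perpVec (e : Fin 2 → R) : Fin 2 → R :=
  ![star (e 1), -star (e 0)]

theorem vecMulVec_add_vecMulVec_perpVec (e : Fin 2 → R) :
    vecMulVec e (star e) + vecMulVec (perpVec e) (star (perpVec e)) = (star e ⬝ᵥ e) • 1 := by
  ext i j
  simp only [Matrix.add_apply, vecMulVec_apply]
  fin_cases i <;> fin_cases j <;> simp [perpVec, dotProduct, Fin.sum_univ_two] <;> ring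

theorem smul_eq_add_perpVec (e x : Fin 2 → R) :
    (star e ⬝ᵥ e) • x = (star e ⬝ᵥ x) • e + (star (perpVec e) ⬝ᵥ x) • perpVec e := by
  simpa only [add_mulVec, vecMulVec_mulVec, op_smul_eq_smul, smul_mulVec, one_mulVec] using
    congrArg (· *ᵥ x) (vecMulVec_add_vecMulVec_perpVec e).symm

theorem star_perpVec_dotProduct_self (e : Fin 2 → R) : star (perpVec e) ⬝ᵥ e = 0 := by
  simp [perpVec, dotProduct, Fin.sum_univ_two, mul_comm]

end Perp

theorem Matrix.IsHermitian.dotProduct_mulVec_eq_of_mulVec_eq {n R : Type*} [Fintype n]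
    [NonUnitalSemiring R] [StarRing R] {A : Matrix n n R} (hA : A.IsHermitian) {x y : n → R}
    (h : A *ᵥ x = A *ᵥ y) : star x ⬝ᵥ A *ᵥ x = star y ⬝ᵥ A *ᵥ y :=
  calc star x ⬝ᵥ A *ᵥ x = star x ⬝ᵥ A *ᵥ y := by rw [h]
    _ = star (A *ᵥ x) ⬝ᵥ y := by rw [dotProduct_mulVec, star_mulVec, hA.eq]
    _ = star y ⬝ᵥ A *ᵥ y := by rw [h, dotProduct_mulVec, star_mulVec, hA.eq]

theorem Matrix.dotProduct_vecMulVec_mulVec {n R : Type*} [Fintype n] [CommSemiring R]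
    (x a b y : n → R) : x ⬝ᵥ vecMulVec a b *ᵥ y = (x ⬝ᵥ a) * (b ⬝ᵥ y) := by
  rw [vecMulVec_mulVec, op_smul_eq_smul, dotProduct_smul, smul_eq_mul, mul_comm]

theorem brk_ofReal_smul (c : ℝ) (x : Fin 2 → ℂ) (A : Matrix (Fin 2) (Fin 2) ℂ) :
    brk ((c : ℂ) • x) A = (c : ℂ) ^ 2 * brk x A := by
  simp only [brk, star_smul, mulVec_smul, smul_dotProduct, dotProduct_smul, smul_eq_mul,
    Complex.star_def, Complex.conj_ofReal]
  ring

theorem add_le_sq_div_of_le {N R k a b x y : ℝ} (hN : 0 < N) (hNR : N ≤ R) (hb : 0 ≤ b)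
    (hab : a + b ≤ N) (hx : N ^ 2 * x = k ^ 2 * a) (hy : R ^ 2 * y = k ^ 2 * b) :
    x + y ≤ k ^ 2 / N := by
  have hy0 : 0 ≤ y := by
    by_contra! h
    nlinarith [mul_pos (pow_pos (hN.trans_le hNR) 2) (neg_pos.2 h), sq_nonneg k]
  rw [le_div_iff₀ hN]
  nlinarith [mul_le_mul_of_nonneg_left hab (sq_nonneg k), mul_nonneg hy0 (sub_nonneg.2 hNR),
    mul_nonneg hy0 hN.le]

/-- The success probabilities of probabilistic storage and retrieval with the pair of states
`u`, `v`: `A` and `B` are the effects retrieving them, `1 - A - B` the failure effect. -/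
def successProbs (u v : Fin 2 → ℂ) : Set ℝ :=
  {x | ∃ A B : Matrix (Fin 2) (Fin 2) ℂ, A.PosSemidef ∧ B.PosSemidef ∧ (1 - A - B).PosSemidef ∧
    brk v A = 0 ∧ brk u B = 0 ∧ x = (brk u A + brk v B).re}

section Optimum

variable {w u : Fin 2 → ℂ} {N k R : ℝ}

theorem sq_div_mem_successProbs (hN : star w ⬝ᵥ w = N) (hN0 : 0 < N) (hk : star w ⬝ᵥ u = k) :
    k ^ 2 / N ∈ successProbs u (perpVec w) := by
  have hN0' : (N : ℂ) ≠ 0 := by exact_mod_cast hN0.ne'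
  have hinv : (0 : ℂ) ≤ (N : ℂ)⁻¹ := by
    rw [← Complex.ofReal_inv]
    exact Complex.zero_le_real.2 (inv_nonneg.2 hN0.le)
  have hcompl : 1 - (N : ℂ)⁻¹ • vecMulVec w (star w) - 0 =
      (N : ℂ)⁻¹ • vecMulVec (perpVec w) (star (perpVec w)) := by
    rw [eq_sub_of_add_eq' (vecMulVec_add_vecMulVec_perpVec w), hN, smul_sub, smul_smul,
      inv_mul_cancel₀ hN0', one_smul, sub_zero]
  refine ⟨(N : ℂ)⁻¹ • vecMulVec w (star w), 0, (posSemidef_vecMulVec_self_star w).smul hinv,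
    .zero, hcompl ▸ (posSemidef_vecMulVec_self_star _).smul hinv, ?_, ?_, ?_⟩
  · rw [brk, smul_mulVec, dotProduct_smul, dotProduct_vecMulVec_mulVec,
      star_perpVec_dotProduct_self, zero_mul, smul_zero]
  · simp [brk]
  · simp only [brk, zero_mulVec, dotProduct_zero, add_zero, smul_mulVec, dotProduct_smul,
      dotProduct_vecMulVec_mulVec]
    rw [star_dotProduct u w, hk, Complex.star_def, Complex.conj_ofReal, smul_eq_mul,
      ← Complex.ofReal_inv, ← Complex.ofReal_mul, ← Complex.ofReal_mul, Complex.ofReal_re]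
    ring

theorem le_sq_div_of_mem_successProbs {x : ℝ} (hN : star w ⬝ᵥ w = N) (hN0 : 0 < N)
    (hk : star w ⬝ᵥ u = k) (hR : star (perpVec w) ⬝ᵥ u = R) (hNR : N ≤ R)
    (hx : x ∈ successProbs u (perpVec w)) : x ≤ k ^ 2 / N := by
  obtain ⟨A, B, hA, hB, hAB, hvA, huB, rfl⟩ := hx
  set v := perpVec w
  have hAv : A *ᵥ v = 0 := (hA.dotProduct_mulVec_zero_iff v).1 hvA
  have hBu : B *ᵥ u = 0 := (hB.dotProduct_mulVec_zero_iff u).1 huB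
  have hu : (N : ℂ) • u = (k : ℂ) • w + (R : ℂ) • v := by
    rw [← hN, ← hk, ← hR]
    exact smul_eq_add_perpVec w u
  have hv : (R : ℂ) • v = (N : ℂ) • u + ((-k : ℝ) : ℂ) • w := by
    rw [hu]
    push_cast
    module
  have hAu : (N : ℂ) ^ 2 * brk u A = (k : ℂ) ^ 2 * brk w A := by
    rw [← brk_ofReal_smul, ← brk_ofReal_smul]
    refine hA.isHermitian.dotProduct_mulVec_eq_of_mulVec_eq ?_
    rw [hu, mulVec_add, mulVec_smul _ (R : ℂ) v, hAv, smul_zero, add_zero]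
  have hBv : (R : ℂ) ^ 2 * brk v B = (k : ℂ) ^ 2 * brk w B := by
    rw [← brk_ofReal_smul, ← neg_sq, ← Complex.ofReal_neg, ← brk_ofReal_smul]
    refine hB.isHermitian.dotProduct_mulVec_eq_of_mulVec_eq ?_
    rw [hv, mulVec_add, mulVec_smul _ (N : ℂ) u, hBu, smul_zero, zero_add]
  have hb : 0 ≤ (brk w B).re := (Complex.le_def.1 (hB.dotProduct_mulVec_nonneg w)).1
  have hab : (brk w A).re + (brk w B).re ≤ N := by
    have hw : 0 ≤ (N : ℂ) - brk w A - brk w B := by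
      simpa only [brk, sub_mulVec, one_mulVec, dotProduct_sub, hN] using
        hAB.dotProduct_mulVec_nonneg w
    have := (Complex.le_def.1 hw).1
    simp only [Complex.zero_re, Complex.sub_re, Complex.ofReal_re] at this
    linarith
  have hx := congrArg Complex.re hAu
  have hy := congrArg Complex.re hBv
  simp only [← Complex.ofReal_pow, Complex.re_ofReal_mul] at hx hy
  exact add_le_sq_div_of_le hN0 hNR hb hab hx hy

theorem isGreatest_successProbs (hN : star w ⬝ᵥ w = N) (hN0 : 0 < N) (hk : star w ⬝ᵥ u = k)
    (hR : star (perpVec w) ⬝ᵥ u = R) (hNR : N ≤ R) :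
    IsGreatest (successProbs u (perpVec w)) (k ^ 2 / N) :=
  ⟨sq_div_mem_successProbs hN hN0 hk, fun _ ↦ le_sq_div_of_mem_successProbs hN hN0 hk hR hNR⟩

end Optimum

theorem sin_mul_cos_sq_add_cos_mul_sin_sq_le_of_one_le {x y : ℝ}
    (h : 1 ≤ Real.cos (2 * x) * (Real.cos (2 * y) + Real.sin (2 * y))) :
    (Real.sin x * Real.cos y) ^ 2 + (Real.cos x * Real.sin y) ^ 2 ≤
      (Real.cos x ^ 2 - Real.sin x ^ 2) * (Real.sin y * Real.cos y) := by
  rw [Real.cos_two_mul, Real.cos_two_mul, Real.sin_two_mul] at h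
  linear_combination (1 / 2) * h
    + (Real.sin y * Real.cos y + Real.cos y ^ 2) * Real.sin_sq_add_cos_sq x
    + Real.cos x ^ 2 * Real.sin_sq_add_cos_sq y

theorem one_sub_cos_two_mul_sq_div_eq (x y : ℝ) :
    (1 - Real.cos (2 * x) ^ 2) / (2 * (1 - Real.cos (2 * x) * Real.cos (2 * y))) =
      (Real.sin x * Real.cos x) ^ 2 /
        ((Real.sin x * Real.cos y) ^ 2 + (Real.cos x * Real.sin y) ^ 2) := by
  have hnum : 1 - Real.cos (2 * x) ^ 2 = 4 * (Real.sin x * Real.cos x) ^ 2 := by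
    rw [Real.cos_two_mul]
    linear_combination (-4 * Real.cos x ^ 2) * Real.sin_sq_add_cos_sq x
  have hden : 2 * (1 - Real.cos (2 * x) * Real.cos (2 * y)) =
      4 * ((Real.sin x * Real.cos y) ^ 2 + (Real.cos x * Real.sin y) ^ 2) := by
    rw [Real.cos_two_mul, Real.cos_two_mul]
    linear_combination (-4 * Real.cos y ^ 2) * Real.sin_sq_add_cos_sq x
      + (-4 * Real.cos x ^ 2) * Real.sin_sq_add_cos_sq y
  rw [hnum, hden, mul_div_mul_left _ _ four_ne_zero]

theorem sin_mul_cos_sq_add_cos_mul_sin_sq_pos {x y : ℝ} (hy : 0 < y) (hyx : y ≤ x)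
    (hx : x < Real.pi / 2) :
    0 < (Real.sin x * Real.cos y) ^ 2 + (Real.cos x * Real.sin y) ^ 2 := by
  have hsin : 0 < Real.sin y := Real.sin_pos_of_pos_of_lt_pi hy (by linarith [Real.pi_pos])
  have hcos : 0 < Real.cos x := Real.cos_pos_of_mem_Ioo ⟨by linarith [Real.pi_pos], hx⟩
  positivity

def wvec (n : ℕ) (α : ℝ) : Fin 2 → ℂ :=
  ![((Real.sin (n * α) * Real.cos α : ℝ) : ℂ), ((Real.cos (n * α) * Real.sin α : ℝ) : ℂ)]

section Wvec

variable (n : ℕ) (α : ℝ)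

theorem perpVec_wvec : perpVec (wvec n α) = vvec n α := by
  ext i
  fin_cases i <;> simp [perpVec, wvec, vvec, -Complex.ofReal_mul]

theorem star_wvec_dotProduct_self :
    star (wvec n α) ⬝ᵥ wvec n α =
      (((Real.sin (n * α) * Real.cos α) ^ 2 + (Real.cos (n * α) * Real.sin α) ^ 2 : ℝ) : ℂ) := by
  simp only [dotProduct, Fin.sum_univ_two, Pi.star_apply, cons_val_zero, cons_val_one,
    Complex.star_def, Complex.conj_ofReal, wvec]
  push_cast
  ring

theorem star_wvec_dotProduct_uvec :
    star (wvec n α) ⬝ᵥ uvec n α = ((Real.sin (n * α) * Real.cos (n * α) : ℝ) : ℂ) := by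
  simp only [dotProduct, Fin.sum_univ_two, Pi.star_apply, cons_val_zero, cons_val_one,
    Complex.star_def, Complex.conj_ofReal, wvec, uvec]
  norm_cast
  linear_combination Real.sin (n * α) * Real.cos (n * α) * Real.cos_sq_add_sin_sq α

theorem star_vvec_dotProduct_uvec :
    star (vvec n α) ⬝ᵥ uvec n α =
      (((Real.cos (n * α) ^ 2 - Real.sin (n * α) ^ 2) * (Real.sin α * Real.cos α) : ℝ) : ℂ) := by
  simp only [dotProduct, Fin.sum_univ_two, Pi.star_apply, cons_val_zero, cons_val_one,
    Complex.star_def, Complex.conj_ofReal, vvec, uvec]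
  push_cast
  ring

end Wvec

theorem optimal_success_small_alpha (n : ℕ) (hn : 1 ≤ n) (α : ℝ) (hα : 0 < α)
    (hdist : 4 * n * α < Real.pi)
    (hreg : 1 ≤ Real.cos (2 * n * α) * (Real.cos (2 * α) + Real.sin (2 * α))) :
    IsGreatest
      {x : ℝ | ∃ A B : Matrix (Fin 2) (Fin 2) ℂ,
        A.PosSemidef ∧ B.PosSemidef ∧ (1 - A - B).PosSemidef ∧
        brk (vvec n α) A = 0 ∧ brk (uvec n α) B = 0 ∧
        x = (brk (uvec n α) A + brk (vvec n α) B).re}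
      ((1 - Real.cos (2 * n * α) ^ 2) / (2 * (1 - Real.cos (2 * n * α) * Real.cos (2 * α)))) := by
  have hα_le : α ≤ n * α := le_mul_of_one_le_left hα.le (by exact_mod_cast hn)
  rw [mul_assoc] at hreg ⊢
  rw [one_sub_cos_two_mul_sq_div_eq, ← perpVec_wvec]
  exact isGreatest_successProbs (star_wvec_dotProduct_self n α)
    (sin_mul_cos_sq_add_cos_mul_sin_sq_pos hα hα_le (by linarith))
    (star_wvec_dotProduct_uvec n α) (perpVec_wvec n α ▸ star_vvec_dotProduct_uvec n α)
    (sin_mul_cos_sq_add_cos_mul_sin_sq_le_of_one_le hreg)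
end
end

section
/- For all β, γ ∈ ℝ and l ∈ {0,1}, the matrices D and W(β,γ,l) commute: D·W(β,γ,l) = W(β,γ,l)·D. (The symmetry of the performance operator underlying Lemma 1 of the paper.) -/
open Matrix Kronecker Complex Filter
open scoped ComplexOrder

noncomputable section

/-- Pauli `σx`. -/
def pX : Matrix (Fin 2) (Fin 2) ℂ := !![0, 1; 1, 0]

/-- `σ⁽⁰⁾ = I`, `σ⁽¹⁾ = σx`. -/
def sigma (l : Fin 2) : Matrix (Fin 2) (Fin 2) ℂ := if l = 0 then 1 else pX

/-- `Z(β,γ) = diag(e^{iβ}, e^{iγ})`. -/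
def Zm (β γ : ℝ) : Matrix (Fin 2) (Fin 2) ℂ :=
  !![Complex.exp (Complex.I * β), 0; 0, Complex.exp (Complex.I * γ)]

/-- The symmetry representation `W(β,γ,l) = σ⁽ˡ⁾ ⊗ₖ (σ⁽ˡ⁾Z(β,γ)) ⊗ₖ (σ⁽ˡ⁾ conj(Z(β,γ)))`. -/
def Wm (β γ : ℝ) (l : Fin 2) :
    Matrix (Fin 2 × Fin 2 × Fin 2) (Fin 2 × Fin 2 × Fin 2) ℂ :=
  (sigma l) ⊗ₖ (((sigma l) * Zm β γ) ⊗ₖ ((sigma l) * (Zm β γ).map (starRingEnd ℂ)))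

/-!
`W(β,γ,l)` is a Kronecker product `A ⊗ B` of unitaries, and `A ψ*ᵢ = ψ*_{l+i}`,
`B |Uᵢ⟩⟩ = |U_{l+i}⟩⟩`: the phases of `Z ⊗ conj Z` cancel on the support `{(0,0),(1,1)}` of
`|Uᵢ⟩⟩`, and `σx ⊗ σx` swaps its two entries. Since a unitary `M` satisfies
`M vvᴴ = (Mv)(Mv)ᴴ M`, multiplying the sum defining `D` by `W` on the left only permutes its
terms and moves `W` to the right.
-/

section General

variable {ι m n : Type*} [Fintype ι] [Fintype m] [Fintype n] [DecidableEq m] [DecidableEq n]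

theorem mul_outer_of_mem_unitaryGroup {A : Matrix m m ℂ} (hA : A ∈ unitaryGroup m ℂ)
    (v : m → ℂ) : A * outer v = outer (A *ᵥ v) * A := by
  rw [outer, outer, star_mulVec, mul_vecMulVec, vecMulVec_mul, vecMul_vecMul,
    ← star_eq_conjTranspose, Unitary.star_mul_self_of_mem hA, vecMul_one]

theorem kronecker_mem_unitaryGroup {A : Matrix m m ℂ} {B : Matrix n n ℂ}
    (hA : A ∈ unitaryGroup m ℂ) (hB : B ∈ unitaryGroup n ℂ) :
    A ⊗ₖ B ∈ unitaryGroup (m × n) ℂ := by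
  rw [mem_unitaryGroup_iff', star_eq_conjTranspose, conjTranspose_kronecker,
    ← mul_kronecker_mul, ← star_eq_conjTranspose, ← star_eq_conjTranspose,
    Unitary.star_mul_self_of_mem hA, Unitary.star_mul_self_of_mem hB, one_kronecker_one]

theorem commute_kronecker_sum_outer_kronecker_outer (π : Equiv.Perm ι)
    {A : Matrix m m ℂ} {B : Matrix n n ℂ} (hA : A ∈ unitaryGroup m ℂ)
    (hB : B ∈ unitaryGroup n ℂ) (ψ : ι → m → ℂ) (u : ι → n → ℂ)
    (hψ : ∀ i, A *ᵥ ψ i = ψ (π i)) (hu : ∀ i, B *ᵥ u i = u (π i)) :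
    Commute (A ⊗ₖ B) (∑ i, outer (ψ i) ⊗ₖ outer (u i)) := by
  have hterm : ∀ i, A ⊗ₖ B * (outer (ψ i) ⊗ₖ outer (u i)) =
      (outer (ψ (π i)) ⊗ₖ outer (u (π i))) * A ⊗ₖ B := fun i => by
    rw [← mul_kronecker_mul, ← mul_kronecker_mul, mul_outer_of_mem_unitaryGroup hA,
      mul_outer_of_mem_unitaryGroup hB, hψ, hu]
  unfold Commute SemiconjBy
  rw [Finset.mul_sum, Finset.sum_mul, Finset.sum_congr rfl fun i _ => hterm i]
  exact Equiv.sum_comp π fun i => (outer (ψ i) ⊗ₖ outer (u i)) * A ⊗ₖ B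

end General

theorem sigma_mem_unitaryGroup (l : Fin 2) : sigma l ∈ unitaryGroup (Fin 2) ℂ := by
  rw [mem_unitaryGroup_iff']
  fin_cases l
  · simp [sigma]
  · ext i j
    fin_cases i <;> fin_cases j <;> simp [sigma, pX, Matrix.mul_apply, Fin.sum_univ_two]

theorem Zm_mem_unitaryGroup (β γ : ℝ) : Zm β γ ∈ unitaryGroup (Fin 2) ℂ := by
  rw [mem_unitaryGroup_iff']
  ext i j
  fin_cases i <;> fin_cases j <;>
    simp [Zm, Matrix.mul_apply, Fin.sum_univ_two, ← Complex.exp_conj, ← Complex.exp_add]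

theorem Zm_map_conj (β γ : ℝ) : (Zm β γ).map (starRingEnd ℂ) = Zm (-β) (-γ) := by
  ext i j
  fin_cases i <;> fin_cases j <;> simp [Zm, ← Complex.exp_conj]

theorem sigma_mulVec_psiStar (n : ℕ) (α : ℝ) (l i : Fin 2) :
    sigma l *ᵥ psiStar n α i = psiStar n α (l + i) := by
  fin_cases l
  · simp [sigma]
  · ext j
    fin_cases i <;> fin_cases j <;> simp [sigma, pX, psiStar, mulVec, dotProduct]

theorem Zm_kronecker_mulVec_Uket (β γ ε : ℝ) :
    (Zm β γ ⊗ₖ Zm (-β) (-γ)) *ᵥ Uket ε = Uket ε := by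
  ext ⟨a, b⟩
  fin_cases a <;> fin_cases b <;>
    simp [Zm, Uket, mulVec, dotProduct, Fintype.sum_prod_type, ← Complex.exp_add]

theorem Zm_kronecker_mulVec_Ui (α β γ : ℝ) (i : Fin 2) :
    (Zm β γ ⊗ₖ Zm (-β) (-γ)) *ᵥ Ui α i = Ui α i := by
  rw [Ui]
  split_ifs <;> exact Zm_kronecker_mulVec_Uket β γ _

theorem pX_kronecker_pX_mulVec_Uket (ε : ℝ) : (pX ⊗ₖ pX) *ᵥ Uket ε = Uket (-ε) := by
  ext ⟨a, b⟩
  fin_cases a <;> fin_cases b <;> simp [pX, Uket, mulVec, dotProduct, Fintype.sum_prod_type]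

theorem sigma_kronecker_sigma_mulVec_Ui (α : ℝ) (l i : Fin 2) :
    (sigma l ⊗ₖ sigma l) *ᵥ Ui α i = Ui α (l + i) := by
  fin_cases l
  · simp [sigma]
  · fin_cases i <;> simp [sigma, Ui, pX_kronecker_pX_mulVec_Uket]

theorem performance_operator_commutes_general (n : ℕ) (α : ℝ) (β γ : ℝ) (l : Fin 2) :
    Dop n α * Wm β γ l = Wm β γ l * Dop n α := by
  have hσ := sigma_mem_unitaryGroup l
  have hB : (sigma l * Zm β γ) ⊗ₖ (sigma l * Zm (-β) (-γ)) ∈ unitaryGroup _ ℂ :=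
    kronecker_mem_unitaryGroup (mul_mem hσ (Zm_mem_unitaryGroup β γ))
      (mul_mem hσ (Zm_mem_unitaryGroup (-β) (-γ)))
  have hU : ∀ i, (sigma l * Zm β γ) ⊗ₖ (sigma l * Zm (-β) (-γ)) *ᵥ Ui α i = Ui α (l + i) :=
    fun i => by
      rw [mul_kronecker_mul, ← mulVec_mulVec, Zm_kronecker_mulVec_Ui,
        sigma_kronecker_sigma_mulVec_Ui]
  have h := commute_kronecker_sum_outer_kronecker_outer (Equiv.addLeft l) hσ hB
    (psiStar n α) (Ui α) (sigma_mulVec_psiStar n α l) hU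
  rw [Dop, Wm, Zm_map_conj]
  exact (h.smul_right (1 / 8 : ℂ)).symm

theorem performance_operator_commutes (n : ℕ) (hn : 1 ≤ n) (α : ℝ) (hα : 0 < α)
    (hdist : 4 * n * α < Real.pi) (β γ : ℝ) (l : Fin 2) :
    Dop n α * Wm β γ l = Wm β γ l * Dop n α :=
  performance_operator_commutes_general n α β γ l
end
end

section
/- Let R be an 8×8 complex matrix (indexed by Fin 2 × Fin 2 × Fin 2) such that R·W(β,γ,l) = W(β,γ,l)·R for all β, γ ∈ ℝ and l ∈ {0,1}, and suppose there exist real numbers λ₀, λ₁ with ⟨ψ*ᵢ|R|ψ*ᵢ⟩ = λᵢ·|Uᵢ⟩⟩⟨⟨Uᵢ| for i = 0,1. Then λ₀ = λ₁. (Second claim of Lemma 1 of the paper: for a symmetric retriever the two retrieval probabilities coincide.) -/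
open Matrix Kronecker Complex Filter
open scoped ComplexOrder

noncomputable section

/-- Partial sandwich `⟨w|R|w⟩` over the first (memory) factor `H₀`. -/
def sand (w : Fin 2 → ℂ)
    (R : Matrix (Fin 2 × Fin 2 × Fin 2) (Fin 2 × Fin 2 × Fin 2) ℂ) :
    Matrix (Fin 2 × Fin 2) (Fin 2 × Fin 2) ℂ :=
  Matrix.of fun p q => ∑ a : Fin 2, ∑ a' : Fin 2,
    (starRingEnd ℂ) (w a) * R (a, p.1, p.2) (a', q.1, q.2) * w a'

/-!
The symmetry with `β = γ = 0`, `l = 1` is the global bit flip `σx ⊗ σx ⊗ σx`, so `R` is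
invariant under flipping all three qubits. Flipping the memory qubit exchanges `ψ*₀` and `ψ*₁`,
and flipping the two other qubits exchanges `|U₀⟩⟩` and `|U₁⟩⟩`; hence the second sandwich
condition is the first one conjugated by the flip, and the two eigenvalues agree.
-/

open Equiv

theorem Matrix.kronecker_permMatrix {m n R : Type*} [DecidableEq m] [DecidableEq n]
    [MulZeroOneClass R] (σ : Perm m) (τ : Perm n) :
    σ.permMatrix R ⊗ₖ τ.permMatrix R = Perm.permMatrix R (σ.prodCongr τ) := by
  ext ⟨a, b⟩ ⟨c, d⟩
  simp [PEquiv.toMatrix_apply, kroneckerMap_apply, ← ite_and, and_comm]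

theorem Matrix.submatrix_self_eq_of_mul_permMatrix_comm {n R : Type*} [Fintype n]
    [DecidableEq n] [NonAssocSemiring R] {M : Matrix n n R} (σ : Perm n)
    (h : M * σ.permMatrix R = σ.permMatrix R * M) : M.submatrix σ σ = M := by
  rw [PEquiv.mul_toMatrix_toPEquiv, PEquiv.toMatrix_toPEquiv_mul] at h
  ext i j
  simpa using (congrFun (congrFun h i) (σ j)).symm

theorem outer_comp {ι κ : Type*} [Fintype ι] [Fintype κ] (v : ι → ℂ) (e : κ → ι) :
    outer (v ∘ e) = (outer v).submatrix e e := by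
  ext
  simp [outer, vecMulVec_apply]

theorem outer_ne_zero {ι : Type*} [Fintype ι] {v : ι → ℂ} (hv : v ≠ 0) : outer v ≠ 0 := by
  obtain ⟨i, hi⟩ := Function.ne_iff.mp hv
  intro h
  exact hi (by simpa [outer, vecMulVec_apply] using congrFun (congrFun h i) i)

theorem sand_comp_of_submatrix_eq {w : Fin 2 → ℂ}
    {R : Matrix (Fin 2 × Fin 2 × Fin 2) (Fin 2 × Fin 2 × Fin 2) ℂ}
    (e : Perm (Fin 2)) (f : Perm (Fin 2 × Fin 2))
    (hR : R.submatrix (e.prodCongr f) (e.prodCongr f) = R) :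
    sand (w ∘ e) R = (sand w R).submatrix f f := by
  ext p q
  conv_lhs => rw [← hR]
  simp only [sand, of_apply, submatrix_apply, prodCongr_apply, Prod.map, Function.comp_apply]
  refine Fintype.sum_equiv e _ _ fun a => ?_
  exact Fintype.sum_equiv e _ _ fun _ => rfl

def revPair : Perm (Fin 2 × Fin 2) := Fin.revPerm.prodCongr Fin.revPerm

def revTriple : Perm (Fin 2 × Fin 2 × Fin 2) := Fin.revPerm.prodCongr revPair

theorem sigma_one : sigma 1 = Fin.revPerm.permMatrix ℂ := by
  ext i j
  fin_cases i <;> fin_cases j <;> simp [sigma, pX, PEquiv.toMatrix_apply]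

theorem Zm_zero : Zm 0 0 = 1 := by
  simp [Zm, Matrix.one_fin_two]

theorem Wm_zero_zero_one : Wm 0 0 1 = revTriple.permMatrix ℂ := by
  rw [Wm, Zm_zero, Matrix.map_one _ (map_zero _) (map_one _), mul_one, sigma_one,
    Matrix.kronecker_permMatrix, Matrix.kronecker_permMatrix]
  rfl

theorem psiStar_one_s9 (n : ℕ) (α : ℝ) : psiStar n α 1 = psiStar n α 0 ∘ Fin.revPerm := by
  ext i
  fin_cases i <;> simp [psiStar]

theorem Ui_one (α : ℝ) : Ui α 1 = Ui α 0 ∘ revPair := by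
  ext ⟨a, b⟩
  fin_cases a <;> fin_cases b <;> simp [Ui, Uket, revPair]

theorem Uket_ne_zero (ε : ℝ) : Uket ε ≠ 0 :=
  Function.ne_iff.mpr ⟨(0, 0), by simp [Uket, Complex.exp_ne_zero]⟩

theorem Ui_ne_zero (α : ℝ) (i : Fin 2) : Ui α i ≠ 0 := by
  unfold Ui
  split_ifs <;> exact Uket_ne_zero _

theorem symmetric_retriever_equal_probabilities_general (n : ℕ) (α : ℝ)
    (R : Matrix (Fin 2 × Fin 2 × Fin 2) (Fin 2 × Fin 2 × Fin 2) ℂ)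
    (hcomm : ∀ (β γ : ℝ) (l : Fin 2), R * Wm β γ l = Wm β γ l * R)
    (lam0 lam1 : ℝ)
    (h0 : sand (psiStar n α 0) R = (lam0 : ℂ) • outer (Ui α 0))
    (h1 : sand (psiStar n α 1) R = (lam1 : ℂ) • outer (Ui α 1)) :
    lam0 = lam1 := by
  have hR : R.submatrix revTriple revTriple = R :=
    Matrix.submatrix_self_eq_of_mul_permMatrix_comm revTriple (Wm_zero_zero_one ▸ hcomm 0 0 1)
  have h : (lam0 : ℂ) • outer (Ui α 1) = (lam1 : ℂ) • outer (Ui α 1) := by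
    rw [← h1, psiStar_one_s9, sand_comp_of_submatrix_eq Fin.revPerm revPair hR, h0, Ui_one,
      outer_comp]
    rfl
  exact_mod_cast smul_left_injective ℂ (outer_ne_zero (Ui_ne_zero α 1)) h

theorem symmetric_retriever_equal_probabilities (n : ℕ) (hn : 1 ≤ n) (α : ℝ) (hα : 0 < α)
    (hdist : 4 * n * α < Real.pi)
    (R : Matrix (Fin 2 × Fin 2 × Fin 2) (Fin 2 × Fin 2 × Fin 2) ℂ)
    (hcomm : ∀ (β γ : ℝ) (l : Fin 2), R * Wm β γ l = Wm β γ l * R)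
    (lam0 lam1 : ℝ)
    (h0 : sand (psiStar n α 0) R = (lam0 : ℂ) • outer (Ui α 0))
    (h1 : sand (psiStar n α 1) R = (lam1 : ℂ) • outer (Ui α 1)) :
    lam0 = lam1 :=
  symmetric_retriever_equal_probabilities_general n α R hcomm lam0 lam1 h0 h1
end
end

section
/- Let R be an 8×8 PSD matrix such that R·W(β,γ,l) = W(β,γ,l)·R for all β, γ ∈ ℝ and l ∈ {0,1}, and suppose there exist λ₀, λ₁ ≥ 0 with ⟨ψ*ᵢ|R|ψ*ᵢ⟩ = λᵢ·|Uᵢ⟩⟩⟨⟨Uᵢ| for i = 0,1. Then R = P·R·P + P′·R·P′. (Lemma 2 of the paper for the perfect probabilistic case: the optimal retriever is block diagonal, i.e. Q·R·Q = 0.) -/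
open Matrix Kronecker Complex Filter
open scoped ComplexOrder

noncomputable section

/-- Tensor product of a vector in `ℂ²` with a vector in `ℂ^{Fin 2 × Fin 2}`. -/
def tv (v : Fin 2 → ℂ) (w : Fin 2 × Fin 2 → ℂ) : Fin 2 × Fin 2 × Fin 2 → ℂ :=
  fun p => v p.1 * w p.2

/-- `|+⟩ = (1,1)/√2`. -/
def plusV : Fin 2 → ℂ := ((Real.sqrt 2 : ℂ))⁻¹ • ![1, 1]

/-- `|−⟩ = (1,−1)/√2`. -/
def minusV : Fin 2 → ℂ := ((Real.sqrt 2 : ℂ))⁻¹ • ![1, -1]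

/-- `|I⟩⟩ = (1,0,0,1)`. -/
def Iket : Fin 2 × Fin 2 → ℂ := fun p =>
  if p = (0, 0) then 1 else if p = (1, 1) then 1 else 0

/-- `|σz⟩⟩ = (1,0,0,−1)`. -/
def Zket : Fin 2 × Fin 2 → ℂ := fun p =>
  if p = (0, 0) then 1 else if p = (1, 1) then -1 else 0

/-- `e₁ = |+⟩⊗|I⟩⟩`, `e₂ = |−⟩⊗|σz⟩⟩`. -/
def eV (i : Fin 2) : Fin 2 × Fin 2 × Fin 2 → ℂ :=
  if i = 0 then tv plusV Iket else tv minusV Zket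

/-- `e₁′ = |+⟩⊗|σz⟩⟩`, `e₂′ = |−⟩⊗|I⟩⟩`. -/
def eV' (i : Fin 2) : Fin 2 × Fin 2 × Fin 2 → ℂ :=
  if i = 0 then tv plusV Zket else tv minusV Iket

/-- The projection `P = (1/2)(e₁e₁ᴴ + e₂e₂ᴴ)`. -/
def Pproj : Matrix (Fin 2 × Fin 2 × Fin 2) (Fin 2 × Fin 2 × Fin 2) ℂ :=
  (1/2 : ℂ) • (Matrix.vecMulVec (eV 0) (star (eV 0)) + Matrix.vecMulVec (eV 1) (star (eV 1)))

/-- The projection `P′ = (1/2)(e₁′(e₁′)ᴴ + e₂′(e₂′)ᴴ)`. -/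
def Pproj' : Matrix (Fin 2 × Fin 2 × Fin 2) (Fin 2 × Fin 2 × Fin 2) ℂ :=
  (1/2 : ℂ) • (Matrix.vecMulVec (eV' 0) (star (eV' 0)) + Matrix.vecMulVec (eV' 1) (star (eV' 1)))

/-! Positivity of `R` turns the vanishing diagonal entries `⟨ψ*ᵢ|R|ψ*ᵢ⟩_{(b,c),(b,c)} = 0`
(`b ≠ c`) into `R (ψ*ᵢ ⊗ |bc⟩) = 0`; as `ψ*₀, ψ*₁` span `ℂ²` (their determinant is
`-i sin 2nα ≠ 0`), `R` vanishes outside the even-parity subspace `b = c`, i.e. `R = QRQ` for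
`Q = I ⊗ |00⟩⟨00| + I ⊗ |11⟩⟨11|`. A direct computation gives `P + P′ = Q` and
`P − P′ = QWQ` with `W = W(0,0,1) = σx ⊗ σx ⊗ σx`, an involution commuting with `R`, so
`2(PRP + P′RP′) = (P+P′)R(P+P′) + (P−P′)R(P−P′) = QRQ + QW(QRQ)WQ = 2R`. -/

theorem eq_compress_add_compress {A : Type*} [Ring A] [IsAddTorsionFree A] {P P' Q W R : A}
    (hsum : P + P' = Q) (hdiff : P - P' = Q * W * Q) (hQ : Q * R * Q = R)
    (hWR : Commute W R) (hW : W * W = 1) :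
    R = P * R * P + P' * R * P' := by
  have hpar : (P + P') * R * (P + P') + (P - P') * R * (P - P') =
      2 • (P * R * P + P' * R * P') := by noncomm_ring
  have hconj : Q * W * Q * R * (Q * W * Q) = R := by
    calc Q * W * Q * R * (Q * W * Q) = Q * (W * (Q * R * Q) * W) * Q := by noncomm_ring
      _ = R := by rw [hQ, hWR.eq, mul_assoc R, hW, mul_one, hQ]
  rw [hsum, hdiff, hQ, hconj, ← two_nsmul] at hpar
  exact nsmul_right_injective two_ne_zero hpar

theorem Matrix.IsHermitian.diagonal_mul_mul_diagonal_eq_self {ι α : Type*} [Fintype ι]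
    [DecidableEq ι] [Semiring α] [StarRing α] {R : Matrix ι ι α} (hR : R.IsHermitian)
    (p : ι → Prop) [DecidablePred p]
    (h : ∀ x y, ¬ p y → R x y = 0) :
    diagonal (fun i => if p i then (1 : α) else 0) * R *
      diagonal (fun i => if p i then (1 : α) else 0) = R := by
  ext x y
  simp only [mul_diagonal, diagonal_mul]
  by_cases hy : p y
  · by_cases hx : p x
    · simp [hx, hy]
    · simp only [hx, hy, if_true, if_false, mul_one]
      rw [← hR.apply, h _ _ hx, star_zero, zero_mul]
  · simp [hy, h x y hy]

theorem Matrix.sub_kronecker {l m n p α : Type*} [NonUnitalNonAssocRing α]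
    (A₁ A₂ : Matrix l m α) (B : Matrix n p α) : (A₁ - A₂) ⊗ₖ B = A₁ ⊗ₖ B - A₂ ⊗ₖ B := by
  ext
  simp [sub_mul]

theorem Matrix.kronecker_sub {l m n p α : Type*} [NonUnitalNonAssocRing α]
    (A : Matrix l m α) (B₁ B₂ : Matrix n p α) : A ⊗ₖ (B₁ - B₂) = A ⊗ₖ B₁ - A ⊗ₖ B₂ := by
  ext
  simp [mul_sub]

theorem mulVec_tv_single_apply (w : Fin 2 → ℂ)
    (R : Matrix (Fin 2 × Fin 2 × Fin 2) (Fin 2 × Fin 2 × Fin 2) ℂ) (p : Fin 2 × Fin 2)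
    (x : Fin 2 × Fin 2 × Fin 2) :
    (R *ᵥ tv w (Pi.single p 1)) x = ∑ a, R x (a, p) * w a := by
  simp only [mulVec, dotProduct, tv, Pi.single_apply, mul_ite, mul_one, mul_zero]
  rw [Fintype.sum_prod_type]
  simp only [Finset.sum_ite_eq', Finset.mem_univ, if_true]

theorem dotProduct_mulVec_tv_single (w : Fin 2 → ℂ)
    (R : Matrix (Fin 2 × Fin 2 × Fin 2) (Fin 2 × Fin 2 × Fin 2) ℂ) (p : Fin 2 × Fin 2) :
    star (tv w (Pi.single p 1)) ⬝ᵥ R *ᵥ tv w (Pi.single p 1) = sand w R p p := by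
  simp only [dotProduct, mulVec_tv_single_apply]
  rw [Fintype.sum_prod_type]
  simp only [tv, Pi.star_apply, Pi.single_apply, mul_ite, mul_one, mul_zero, RCLike.star_def,
    apply_ite (starRingEnd ℂ), map_zero, ite_mul, zero_mul, Finset.sum_ite_eq', Finset.mem_univ,
    if_true]
  simp only [sand, of_apply, Finset.mul_sum, mul_assoc]

theorem Matrix.PosSemidef.apply_eq_zero_of_sand_eq_zero
    {R : Matrix (Fin 2 × Fin 2 × Fin 2) (Fin 2 × Fin 2 × Fin 2) ℂ} (hR : R.PosSemidef)
    (w : Fin 2 → Fin 2 → ℂ) (hw : (of w).det ≠ 0) {p : Fin 2 × Fin 2}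
    (h : ∀ i, sand (w i) R p p = 0) (x : Fin 2 × Fin 2 × Fin 2) (a : Fin 2) :
    R x (a, p) = 0 := by
  have hker : ∀ i, R *ᵥ tv (w i) (Pi.single p 1) = 0 := fun i =>
    (hR.dotProduct_mulVec_zero_iff _).mp (by rw [dotProduct_mulVec_tv_single, h i])
  have hrow : of w *ᵥ (fun a => R x (a, p)) = 0 := by
    ext i
    calc (of w *ᵥ fun a => R x (a, p)) i = (R *ᵥ tv (w i) (Pi.single p 1)) x := by
          rw [mulVec_tv_single_apply]
          simp only [mulVec, dotProduct, of_apply, mul_comm]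
      _ = 0 := congrFun (hker i) x
  exact congrFun (eq_zero_of_mulVec_eq_zero hw hrow) a

theorem sqrt_two_inv_sq : ((Real.sqrt 2 : ℂ))⁻¹ ^ 2 = 1 / 2 := by
  rw [inv_pow, ← Complex.ofReal_pow, Real.sq_sqrt zero_le_two]
  norm_num

theorem det_of_psiStar (n : ℕ) (α : ℝ) :
    (of (psiStar n α)).det = -(I * Real.sin (2 * n * α)) := by
  have hsin : (Real.sin (2 * n * α) : ℂ) =
      (cexp (-(I * n * α)) ^ 2 - cexp (I * n * α) ^ 2) * I / 2 := by
    rw [Complex.ofReal_sin, Complex.sin, ← Complex.exp_nat_mul, ← Complex.exp_nat_mul]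
    push_cast
    ring_nf
  rw [det_fin_two, hsin]
  simp only [psiStar, of_apply, if_pos, one_ne_zero, if_false, Pi.smul_apply, smul_eq_mul,
    cons_val_zero, cons_val_one, cons_val_fin_one]
  linear_combination (cexp (-(I * n * α)) ^ 2 - cexp (I * n * α) ^ 2) * (sqrt_two_inv_sq + I_sq / 2)

theorem Ui_apply_of_ne (α : ℝ) (i : Fin 2) {p : Fin 2 × Fin 2} (hp : p.1 ≠ p.2) :
    Ui α i p = 0 := by
  obtain ⟨b, c⟩ := p
  unfold Ui
  split_ifs <;> fin_cases b <;> fin_cases c <;> simp_all [Uket]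

theorem smul_outer_Ui_apply_of_ne (c : ℂ) (α : ℝ) (i : Fin 2) {p : Fin 2 × Fin 2}
    (hp : p.1 ≠ p.2) : (c • outer (Ui α i)) p p = 0 := by
  simp [outer, vecMulVec_apply, Ui_apply_of_ne α i hp]

def evenProj : Matrix (Fin 2 × Fin 2) (Fin 2 × Fin 2) ℂ :=
  diagonal fun p => if p.1 = p.2 then 1 else 0

theorem one_kronecker_evenProj :
    (1 ⊗ₖ evenProj : Matrix (Fin 2 × Fin 2 × Fin 2) _ ℂ) =
      diagonal fun x => if x.2.1 = x.2.2 then 1 else 0 := by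
  rw [evenProj, ← diagonal_one, diagonal_kronecker_diagonal]
  simp only [one_mul]

theorem outer_tv (v : Fin 2 → ℂ) (w : Fin 2 × Fin 2 → ℂ) :
    outer (tv v w) = outer v ⊗ₖ outer w := by
  ext ⟨a, p⟩ ⟨a', p'⟩
  simp only [outer, vecMulVec_apply, kroneckerMap_apply, tv, Pi.star_apply, star_mul']
  ring

theorem outer_plusV_add_outer_minusV : outer plusV + outer minusV = 1 := by
  ext a a'
  simp only [outer, Matrix.add_apply, vecMulVec_apply, Pi.star_apply]
  fin_cases a <;> fin_cases a' <;>
    simp [plusV, minusV, one_apply] <;> linear_combination 2 * sqrt_two_inv_sq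

theorem outer_plusV_sub_outer_minusV : outer plusV - outer minusV = pX := by
  ext a a'
  simp only [outer, Matrix.sub_apply, vecMulVec_apply, Pi.star_apply]
  fin_cases a <;> fin_cases a' <;>
    simp [plusV, minusV, pX] <;> linear_combination 2 * sqrt_two_inv_sq

theorem outer_Iket_add_outer_Zket : outer Iket + outer Zket = (2 : ℂ) • evenProj := by
  ext ⟨b, c⟩ ⟨b', c'⟩
  simp only [outer, Matrix.add_apply, vecMulVec_apply, Pi.star_apply]
  fin_cases b <;> fin_cases c <;> fin_cases b' <;> fin_cases c' <;>
    simp [Iket, Zket, evenProj] <;> norm_num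

theorem outer_Iket_sub_outer_Zket :
    outer Iket - outer Zket = (2 : ℂ) • (evenProj * (pX ⊗ₖ pX) * evenProj) := by
  ext ⟨b, c⟩ ⟨b', c'⟩
  simp only [outer, Matrix.sub_apply, vecMulVec_apply, Pi.star_apply]
  fin_cases b <;> fin_cases c <;> fin_cases b' <;> fin_cases c' <;>
    simp [Iket, Zket, evenProj, pX, mul_apply, Fintype.sum_prod_type] <;> norm_num

theorem Pproj_eq_kronecker :
    Pproj = (1 / 2 : ℂ) • (outer plusV ⊗ₖ outer Iket + outer minusV ⊗ₖ outer Zket) := by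
  rw [← outer_tv, ← outer_tv]
  rfl

theorem Pproj'_eq_kronecker :
    Pproj' = (1 / 2 : ℂ) • (outer plusV ⊗ₖ outer Zket + outer minusV ⊗ₖ outer Iket) := by
  rw [← outer_tv, ← outer_tv]
  rfl

theorem pX_mul_self : pX * pX = 1 := by
  ext i j
  fin_cases i <;> fin_cases j <;> simp [pX, mul_apply]

theorem Wm_zero_zero_one_s10 : Wm 0 0 1 = pX ⊗ₖ (pX ⊗ₖ pX) := by
  have hZ : Zm 0 0 = 1 := by
    ext i j
    fin_cases i <;> fin_cases j <;> simp [Zm]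
  simp [Wm, sigma, hZ]

theorem Wm_zero_zero_one_mul_self : Wm 0 0 1 * Wm 0 0 1 = 1 := by
  rw [Wm_zero_zero_one_s10, ← mul_kronecker_mul, ← mul_kronecker_mul, pX_mul_self,
    one_kronecker_one, one_kronecker_one]

theorem Pproj_add_Pproj' : Pproj + Pproj' = 1 ⊗ₖ evenProj := by
  have : Pproj + Pproj' =
      (1 / 2 : ℂ) • ((outer plusV + outer minusV) ⊗ₖ (outer Iket + outer Zket)) := by
    rw [Pproj_eq_kronecker, Pproj'_eq_kronecker, add_kronecker, kronecker_add, kronecker_add]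
    module
  rw [this, outer_plusV_add_outer_minusV, outer_Iket_add_outer_Zket, kronecker_smul, smul_smul]
  norm_num

theorem Pproj_sub_Pproj' :
    Pproj - Pproj' = (1 ⊗ₖ evenProj) * Wm 0 0 1 * (1 ⊗ₖ evenProj) := by
  have : Pproj - Pproj' =
      (1 / 2 : ℂ) • ((outer plusV - outer minusV) ⊗ₖ (outer Iket - outer Zket)) := by
    rw [Pproj_eq_kronecker, Pproj'_eq_kronecker, sub_kronecker, kronecker_sub, kronecker_sub]
    module
  rw [this, outer_plusV_sub_outer_minusV, outer_Iket_sub_outer_Zket, kronecker_smul, smul_smul,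
    Wm_zero_zero_one_s10, ← mul_kronecker_mul, ← mul_kronecker_mul, one_mul, mul_one]
  norm_num

theorem block_diagonal_retriever_general (n : ℕ) (hn : 1 ≤ n) (α : ℝ) (hα : 0 < α)
    (hdist : 4 * n * α < Real.pi)
    (R : Matrix (Fin 2 × Fin 2 × Fin 2) (Fin 2 × Fin 2 × Fin 2) ℂ)
    (hR : R.PosSemidef)
    (hcomm : ∀ (β γ : ℝ) (l : Fin 2), R * Wm β γ l = Wm β γ l * R)
    (lam0 lam1 : ℝ)
    (h0 : sand (psiStar n α 0) R = (lam0 : ℂ) • outer (Ui α 0))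
    (h1 : sand (psiStar n α 1) R = (lam1 : ℂ) • outer (Ui α 1)) :
    R = Pproj * R * Pproj + Pproj' * R * Pproj' := by
  have hdet : (of (psiStar n α)).det ≠ 0 := by
    have hnα : 0 < 2 * (n : ℝ) * α := by
      have : (0 : ℝ) < n := by exact_mod_cast hn
      positivity
    have hsin := (Real.sin_pos_of_pos_of_lt_pi hnα (by linarith)).ne'
    rw [det_of_psiStar, neg_ne_zero]
    exact mul_ne_zero I_ne_zero (ofReal_ne_zero.mpr hsin)
  have hsand : ∀ i, ∀ p : Fin 2 × Fin 2, p.1 ≠ p.2 → sand (psiStar n α i) R p p = 0 := by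
    refine Fin.forall_fin_two.2 ⟨fun p hp => ?_, fun p hp => ?_⟩
    · rw [h0]; exact smul_outer_Ui_apply_of_ne _ α 0 hp
    · rw [h1]; exact smul_outer_Ui_apply_of_ne _ α 1 hp
  have hQ : (1 ⊗ₖ evenProj) * R * (1 ⊗ₖ evenProj) = R := by
    rw [one_kronecker_evenProj]
    exact hR.1.diagonal_mul_mul_diagonal_eq_self _ fun x ⟨a, p⟩ hp =>
      hR.apply_eq_zero_of_sand_eq_zero _ hdet (fun i => hsand i p hp) x a
  have : IsAddTorsionFree (Matrix (Fin 2 × Fin 2 × Fin 2) (Fin 2 × Fin 2 × Fin 2) ℂ) :=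
    .of_module_rat _
  exact eq_compress_add_compress Pproj_add_Pproj' Pproj_sub_Pproj' hQ (hcomm 0 0 1).symm
    Wm_zero_zero_one_mul_self

theorem block_diagonal_retriever (n : ℕ) (hn : 1 ≤ n) (α : ℝ) (hα : 0 < α)
    (hdist : 4 * n * α < Real.pi)
    (R : Matrix (Fin 2 × Fin 2 × Fin 2) (Fin 2 × Fin 2 × Fin 2) ℂ)
    (hR : R.PosSemidef)
    (hcomm : ∀ (β γ : ℝ) (l : Fin 2), R * Wm β γ l = Wm β γ l * R)
    (lam0 lam1 : ℝ) (h0nn : 0 ≤ lam0) (h1nn : 0 ≤ lam1)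
    (h0 : sand (psiStar n α 0) R = (lam0 : ℂ) • outer (Ui α 0))
    (h1 : sand (psiStar n α 1) R = (lam1 : ℂ) • outer (Ui α 1)) :
    R = Pproj * R * Pproj + Pproj' * R * Pproj' :=
  block_diagonal_retriever_general n hn α hα hdist R hR hcomm lam0 lam1 h0 h1
end
end

section
/- The value 1/2 + (1/2)·√(1 − (sin(2α)·cos(2nα))²) is the greatest element of the set {x : ℝ | ∃ a b : ℝ, a² + b² = 1 ∧ x = (a·cₙ·c + b·sₙ·s)² + (a·sₙ·c + b·cₙ·s)²}. (Appendix B of the paper: the optimal approximate deterministic fidelity is attained by a measure-and-prepare strategy parametrised by real a, b with a² + b² = 1.) -/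
open Real

/-! Using `a² + b² = 1` and the double-angle formulas, the fidelity equals
`1/2 + ((a² - b²) C + 2ab S) / 2` with `C = cos 2α` and `S = sin 2α · sin 2nα`. As `(a, b)` runs
over the unit circle, so does `(a² - b², 2ab)` (squaring in `ℂ`), and the maximum of a linear form
`(p, q) ↦ pC + qS` on the unit circle is `√(C² + S²)` (Cauchy–Schwarz, attained at `(C, S)/√(C² + S²)`).
Finally `C² + S² = 1 - (sin 2α · cos 2nα)²`. -/

lemma isGreatest_linear_on_unitCircle (C S : ℝ) :
    IsGreatest {x : ℝ | ∃ p q : ℝ, p ^ 2 + q ^ 2 = 1 ∧ x = p * C + q * S} (√(C ^ 2 + S ^ 2)) := by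
  refine ⟨?_, ?_⟩
  · rcases (sqrt_nonneg (C ^ 2 + S ^ 2)).eq_or_lt with hzero | hpos
    · have hC : C = 0 := by nlinarith [sqrt_eq_zero'.mp hzero.symm, sq_nonneg S]
      have hS : S = 0 := by nlinarith [sqrt_eq_zero'.mp hzero.symm, sq_nonneg C]
      exact ⟨1, 0, by norm_num, by rw [← hzero, hC, hS]; ring⟩
    · have hR2 := sq_sqrt (add_nonneg (sq_nonneg C) (sq_nonneg S))
      refine ⟨C / √(C ^ 2 + S ^ 2), S / √(C ^ 2 + S ^ 2), ?_, ?_⟩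
      · field_simp; linarith
      · field_simp; linarith
  · rintro x ⟨p, q, hpq, rfl⟩
    have cauchySchwarz : (p * C + q * S) ^ 2 ≤ C ^ 2 + S ^ 2 := by
      nlinarith [sq_nonneg (p * S - q * C)]
    exact (le_abs_self _).trans (abs_le_sqrt cauchySchwarz)

lemma exists_sq_sub_sq_eq_of_sq_add_sq_eq_one {p q : ℝ} (hpq : p ^ 2 + q ^ 2 = 1) :
    ∃ a b : ℝ, a ^ 2 + b ^ 2 = 1 ∧ p = a ^ 2 - b ^ 2 ∧ q = 2 * a * b := by
  obtain ⟨z, hz⟩ := IsAlgClosed.exists_eq_mul_self (⟨p, q⟩ : ℂ)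
  have hp : p = z.re ^ 2 - z.im ^ 2 := by simpa [sq] using congrArg Complex.re hz
  have hq : q = 2 * z.re * z.im := by
    have := congrArg Complex.im hz
    simp only [Complex.mul_im] at this
    linarith
  refine ⟨z.re, z.im, ?_, hp, hq⟩
  have normSq_sq : (z.re ^ 2 + z.im ^ 2) ^ 2 = 1 := by rw [← hpq, hp, hq]; ring
  exact (pow_eq_one_iff_of_nonneg (by positivity) two_ne_zero).mp normSq_sq

lemma isGreatest_doubleAngle_on_unitCircle (C S : ℝ) :
    IsGreatest {x : ℝ | ∃ a b : ℝ, a ^ 2 + b ^ 2 = 1 ∧ x = (a ^ 2 - b ^ 2) * C + 2 * a * b * S}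
      (√(C ^ 2 + S ^ 2)) := by
  convert isGreatest_linear_on_unitCircle C S using 1
  ext x
  constructor
  · rintro ⟨a, b, hab, rfl⟩
    exact ⟨a ^ 2 - b ^ 2, 2 * a * b, by linear_combination (a ^ 2 + b ^ 2 + 1) * hab, rfl⟩
  · rintro ⟨p, q, hpq, rfl⟩
    obtain ⟨a, b, hab, rfl, rfl⟩ := exists_sq_sub_sq_eq_of_sq_add_sq_eq_one hpq
    exact ⟨a, b, hab, rfl⟩

lemma rotated_sq_add_sq_eq {a b : ℝ} (hab : a ^ 2 + b ^ 2 = 1) (α β : ℝ) :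
    (a * cos β * cos α + b * sin β * sin α) ^ 2 + (a * sin β * cos α + b * cos β * sin α) ^ 2
      = 1 / 2 + (1 / 2) * ((a ^ 2 - b ^ 2) * cos (2 * α)
          + 2 * a * b * (sin (2 * α) * sin (2 * β))) := by
  rw [cos_two_mul', sin_two_mul, sin_two_mul]
  linear_combination (a ^ 2 * cos α ^ 2 + b ^ 2 * sin α ^ 2) * sin_sq_add_cos_sq β
    + ((cos α ^ 2 + sin α ^ 2) / 2) * hab + (1 / 2) * sin_sq_add_cos_sq α

lemma cos_sq_add_sin_mul_sin_sq (α β : ℝ) :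
    cos α ^ 2 + (sin α * sin β) ^ 2 = 1 - (sin α * cos β) ^ 2 := by
  linear_combination cos_sq_add_sin_sq α + sin α ^ 2 * sin_sq_add_cos_sq β

lemma isGreatest_rotated_sq_add_sq (α β : ℝ) :
    IsGreatest
      {x : ℝ | ∃ a b : ℝ, a ^ 2 + b ^ 2 = 1 ∧
        x = (a * cos β * cos α + b * sin β * sin α) ^ 2
          + (a * sin β * cos α + b * cos β * sin α) ^ 2}
      (1 / 2 + (1 / 2) * √(cos (2 * α) ^ 2 + (sin (2 * α) * sin (2 * β)) ^ 2)) := by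
  have hset : {x : ℝ | ∃ a b : ℝ, a ^ 2 + b ^ 2 = 1 ∧
        x = (a * cos β * cos α + b * sin β * sin α) ^ 2
          + (a * sin β * cos α + b * cos β * sin α) ^ 2}
      = (fun y => 1 / 2 + (1 / 2) * y) ''
          {x | ∃ a b : ℝ, a ^ 2 + b ^ 2 = 1 ∧
            x = (a ^ 2 - b ^ 2) * cos (2 * α) + 2 * a * b * (sin (2 * α) * sin (2 * β))} := by
    ext x
    constructor
    · rintro ⟨a, b, hab, rfl⟩
      exact ⟨_, ⟨a, b, hab, rfl⟩, (rotated_sq_add_sq_eq hab α β).symm⟩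
    · rintro ⟨_, ⟨a, b, hab, rfl⟩, rfl⟩
      exact ⟨a, b, hab, (rotated_sq_add_sq_eq hab α β).symm⟩
  have affine_mono : Monotone fun y : ℝ => 1 / 2 + (1 / 2) * y := fun _ _ h => by
    dsimp only; linarith
  rw [hset]
  exact affine_mono.map_isGreatest (isGreatest_doubleAngle_on_unitCircle _ _)

theorem measure_and_prepare_optimal_general (n : ℕ) (α : ℝ) :
    IsGreatest
      {x : ℝ | ∃ a b : ℝ, a ^ 2 + b ^ 2 = 1 ∧
        x = (a * Real.cos (n * α) * Real.cos α + b * Real.sin (n * α) * Real.sin α) ^ 2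
          + (a * Real.sin (n * α) * Real.cos α + b * Real.cos (n * α) * Real.sin α) ^ 2}
      (1 / 2 + (1 / 2) * Real.sqrt (1 - (Real.sin (2 * α) * Real.cos (2 * n * α)) ^ 2)) := by
  rw [show 2 * n * α = 2 * (n * α) by ring, ← cos_sq_add_sin_mul_sin_sq]
  exact isGreatest_rotated_sq_add_sq α (n * α)

theorem measure_and_prepare_optimal (n : ℕ) (hn : 1 ≤ n) (α : ℝ) (hα : 0 < α)
    (hdist : 4 * n * α < Real.pi) :
    IsGreatest
      {x : ℝ | ∃ a b : ℝ, a ^ 2 + b ^ 2 = 1 ∧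
        x = (a * Real.cos (n * α) * Real.cos α + b * Real.sin (n * α) * Real.sin α) ^ 2
          + (a * Real.sin (n * α) * Real.cos α + b * Real.cos (n * α) * Real.sin α) ^ 2}
      (1 / 2 + (1 / 2) * Real.sqrt (1 - (Real.sin (2 * α) * Real.cos (2 * n * α)) ^ 2)) :=
  measure_and_prepare_optimal_general n α
end

section
/- For every natural number n ≥ 1, the function α ↦ (1 − cos(2nα)²)/(2·(1 − cos(2nα)·cos(2α))) tends to n²/(n² + 1) as α tends to 0 from the right (i.e. Filter.Tendsto along 𝓝[>] 0 to 𝓝 (n²/(n²+1))). (Leading order of Eq. (25) of the paper: the optimal success probability of perfect probabilistic storage and retrieval of two almost-identical unitaries approaches 1 − 1/(n²+1), a quadratic improvement in n over the group-covariant protocol.) -/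
/-!
Since `1 - cos (2x) = 2 x² sinc(x)²`, both the numerator and the denominator are `α²` times a
function continuous at `0`; after cancelling `α²` the quotient is continuous at `0`, where it
takes the value `t² · 2 / (2 (t² + 1))`.
-/

open Filter Topology Real

lemma Real.one_sub_cos_two_mul_eq_mul_sinc_sq (x : ℝ) : 1 - cos (2 * x) = 2 * x ^ 2 * sinc x ^ 2 := by
  rcases eq_or_ne x 0 with rfl | hx
  · simp
  · rw [sinc_of_ne_zero hx, cos_two_mul_eq_one_sub]
    field_simp
    ring

lemma tendsto_one_sub_cos_sq_div_nhdsNE (t : ℝ) :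
    Tendsto (fun α : ℝ => (1 - cos (2 * t * α) ^ 2) / (2 * (1 - cos (2 * t * α) * cos (2 * α))))
      (𝓝[≠] 0) (𝓝 (t ^ 2 / (t ^ 2 + 1))) := by
  set F : ℝ → ℝ := fun α =>
    t ^ 2 * sinc (t * α) ^ 2 * (1 + cos (2 * t * α)) /
      (2 * (t ^ 2 * sinc (t * α) ^ 2 + cos (2 * t * α) * sinc α ^ 2)) with hF
  have hF_cont : ContinuousAt F 0 := by
    refine ContinuousAt.div (by fun_prop) (by fun_prop) ?_
    simp only [mul_zero, sinc_zero, cos_zero]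
    positivity
  have hF_zero : F 0 = t ^ 2 / (t ^ 2 + 1) := by
    simp only [hF, mul_zero, sinc_zero, cos_zero]
    field_simp
    ring
  have h_eq : ∀ α ≠ 0, (1 - cos (2 * t * α) ^ 2) / (2 * (1 - cos (2 * t * α) * cos (2 * α))) = F α := by
    intro α hα
    have h_num : 1 - cos (2 * t * α) ^ 2 = (1 - cos (2 * (t * α))) * (1 + cos (2 * t * α)) := by
      rw [← mul_assoc]; ring
    have h_den : 1 - cos (2 * t * α) * cos (2 * α) =
        (1 - cos (2 * (t * α))) + cos (2 * t * α) * (1 - cos (2 * α)) := by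
      rw [← mul_assoc]; ring
    rw [h_num, h_den, one_sub_cos_two_mul_eq_mul_sinc_sq, one_sub_cos_two_mul_eq_mul_sinc_sq, hF]
    beta_reduce
    conv_rhs => rw [← mul_div_mul_left _ _ (by positivity : 2 * α ^ 2 ≠ 0)]
    congr 1 <;> ring
  rw [← hF_zero]
  exact (hF_cont.tendsto.mono_left nhdsWithin_le_nhds).congr'
    (eventually_nhdsWithin_of_forall fun α hα => (h_eq α hα).symm)

theorem success_probability_small_alpha_limit_general (n : ℕ) :
    Filter.Tendsto
      (fun α : ℝ => (1 - Real.cos (2 * n * α) ^ 2) /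
        (2 * (1 - Real.cos (2 * n * α) * Real.cos (2 * α))))
      (nhdsWithin 0 (Set.Ioi 0))
      (nhds ((n : ℝ) ^ 2 / ((n : ℝ) ^ 2 + 1))) :=
  (tendsto_one_sub_cos_sq_div_nhdsNE n).mono_left
    (nhdsWithin_mono _ fun _ hα => ne_of_gt hα)

theorem success_probability_small_alpha_limit (n : ℕ) (hn : 1 ≤ n) :
    Filter.Tendsto
      (fun α : ℝ => (1 - Real.cos (2 * n * α) ^ 2) /
        (2 * (1 - Real.cos (2 * n * α) * Real.cos (2 * α))))
      (nhdsWithin 0 (Set.Ioi 0))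
      (nhds ((n : ℝ) ^ 2 / ((n : ℝ) ^ 2 + 1))) :=
  success_probability_small_alpha_limit_general n
end

section
/- Let α, θ be real numbers with 0 ≤ 2α ≤ π/2 and |θ| ≤ 2α. Then the complex absolute value ‖(1 : ℂ) − cos(2α)·exp(i·θ)‖ ≤ sin(2α). (The key inequality of Appendix C of the paper guaranteeing that the ansatz isometry for perfect probabilistic retrieval in dimension d > 2 exists in the large-α regime: the junk-state overlaps y_{k,k} = (1 − cos(2α)·e^{iθ})/sin(2α) have modulus at most 1 whenever the eigenphase difference θ of the relative unitary satisfies |θ| ≤ 2α.) -/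
open Matrix Kronecker Complex Filter
open scoped ComplexOrder

noncomputable section

/-! With `c = cos 2α ≥ 0`, squaring turns the claim into `1 - 2c cos θ + c² ≤ 1 - c² = sin² 2α`,
i.e. `c² ≤ c cos θ`, which holds because `cos` is decreasing on `[0, π]` and `|θ| ≤ 2α`. -/

theorem Complex.norm_one_sub_ofReal_mul_exp_sq (c θ : ℝ) :
    ‖(1 : ℂ) - c * exp (I * θ)‖ ^ 2 = 1 - 2 * c * Real.cos θ + c ^ 2 := by
  rw [Complex.sq_norm, mul_comm I, exp_mul_I, normSq_apply]
  simp only [sub_re, sub_im, one_re, one_im, mul_re, mul_im, ofReal_re, ofReal_im, add_re,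
    add_im, I_re, I_im, cos_ofReal_re, cos_ofReal_im, sin_ofReal_re, sin_ofReal_im]
  nlinarith [Real.sin_sq_add_cos_sq θ]

theorem Complex.norm_one_sub_ofReal_mul_exp_le {c θ : ℝ} (hc : 0 ≤ c) (hcθ : c ≤ Real.cos θ) :
    ‖(1 : ℂ) - c * exp (I * θ)‖ ≤ √(1 - c ^ 2) := by
  apply Real.le_sqrt_of_sq_le
  rw [norm_one_sub_ofReal_mul_exp_sq]
  nlinarith [mul_le_mul_of_nonneg_left hcθ hc]

theorem junk_overlap_bound (α θ : ℝ) (h0 : 0 ≤ 2 * α) (h1 : 2 * α ≤ Real.pi / 2)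
    (hθ : |θ| ≤ 2 * α) :
    ‖(1 : ℂ) - (Real.cos (2 * α) : ℂ) * Complex.exp (Complex.I * θ)‖
      ≤ Real.sin (2 * α) := by
  have h2α_le_pi : 2 * α ≤ Real.pi := h1.trans (by linarith [Real.pi_pos])
  have hcos : Real.cos (2 * α) ≤ Real.cos θ := by
    rw [← Real.cos_abs θ]
    exact Real.cos_le_cos_of_nonneg_of_le_pi (abs_nonneg θ) h2α_le_pi hθ
  have hsin : Real.sin (2 * α) = √(1 - Real.cos (2 * α) ^ 2) := by
    rw [← Real.sin_sq, Real.sqrt_sq (Real.sin_nonneg_of_nonneg_of_le_pi h0 h2α_le_pi)]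
  rw [hsin]
  exact Complex.norm_one_sub_ofReal_mul_exp_le (Real.cos_nonneg_of_mem_Icc ⟨by linarith, h1⟩) hcos
end
end

section
/- Let n be a natural number with n ≥ 1, α a real number with 0 < α and 4·n·α < π, and θ a real number with |θ| ≤ 2α. Set P := (1 − cos(2nα)²)/(2·(1 − cos(2nα)·cos(2α))). Then 0 ≤ P ≤ 1 and the complex absolute value ‖(cos(2nα) : ℂ) − P·exp(i·θ)‖ ≤ 1 − P. (The feasibility inequality of Appendix C of the paper in the small-α regime: with x = 1 the junk-state overlaps y = (cos(2nα) − P·e^{iθ})/(1 − P) have modulus at most 1, so the optimal qubit success probability is achievable for two unitaries in any dimension d.) -/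
/-!
Write `c = cos (2nα)` and `b = cos (2α)`, so that `0 ≤ c < 1` and `b ≤ cos θ`. The success
probability `P = (1 - c²) / (2 (1 - c b))` is exactly the value for which
`c² - 2 P c b + P² = (1 - P)²`. By the law of cosines
`‖c - P e^{iθ}‖² = c² - 2 P c cos θ + P²`, and since `P c ≥ 0` this is at most the same expression
with `cos θ` replaced by its lower bound `b`, i.e. at most `(1 - P)²`.
-/

open Complex

noncomputable def retrievalSuccessProb (c b : ℝ) : ℝ :=
  (1 - c ^ 2) / (2 * (1 - c * b))

lemma one_sub_mul_pos_of_lt_one {c b : ℝ} (hc₀ : 0 ≤ c) (hc₁ : c < 1) (hb : b ≤ 1) :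
    0 < 1 - c * b := by
  nlinarith

section retrievalSuccessProb

variable {c b : ℝ}

lemma two_mul_retrievalSuccessProb_mul (hc₀ : 0 ≤ c) (hc₁ : c < 1) (hb : b ≤ 1) :
    2 * retrievalSuccessProb c b * (1 - c * b) = 1 - c ^ 2 := by
  have hD := one_sub_mul_pos_of_lt_one hc₀ hc₁ hb
  unfold retrievalSuccessProb
  field_simp

lemma retrievalSuccessProb_nonneg (hc₀ : 0 ≤ c) (hc₁ : c < 1) (hb : b ≤ 1) :
    0 ≤ retrievalSuccessProb c b :=
  div_nonneg (by nlinarith) (by linarith [one_sub_mul_pos_of_lt_one hc₀ hc₁ hb])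

lemma retrievalSuccessProb_le_one (hc₀ : 0 ≤ c) (hc₁ : c < 1) (hb : b ≤ 1) :
    retrievalSuccessProb c b ≤ 1 := by
  have hD := one_sub_mul_pos_of_lt_one hc₀ hc₁ hb
  rw [retrievalSuccessProb, div_le_one (by linarith)]
  nlinarith

end retrievalSuccessProb

lemma norm_ofReal_sub_mul_exp_sq (c p θ : ℝ) :
    ‖(c : ℂ) - (p : ℂ) * exp (I * θ)‖ ^ 2 = c ^ 2 - 2 * p * c * Real.cos θ + p ^ 2 := by
  rw [Complex.sq_norm, normSq_apply, mul_comm I, exp_mul_I, ← ofReal_cos, ← ofReal_sin]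
  simp only [sub_re, sub_im, mul_re, mul_im, add_re, add_im, ofReal_re, ofReal_im, I_re, I_im]
  linear_combination p ^ 2 * Real.sin_sq_add_cos_sq θ

lemma norm_sub_retrievalSuccessProb_mul_exp_le {c b θ : ℝ} (hc₀ : 0 ≤ c) (hc₁ : c < 1)
    (hbθ : b ≤ Real.cos θ) :
    ‖(c : ℂ) - (retrievalSuccessProb c b : ℂ) * exp (I * θ)‖ ≤ 1 - retrievalSuccessProb c b := by
  have hb : b ≤ 1 := hbθ.trans (Real.cos_le_one θ)
  set P := retrievalSuccessProb c b
  have hP₀ : 0 ≤ P := retrievalSuccessProb_nonneg hc₀ hc₁ hb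
  have hP₁ : P ≤ 1 := retrievalSuccessProb_le_one hc₀ hc₁ hb
  have hP := two_mul_retrievalSuccessProb_mul hc₀ hc₁ hb
  have hcos : 2 * P * c * b ≤ 2 * P * c * Real.cos θ := by gcongr
  apply sq_le_sq₀ (norm_nonneg _) (by linarith) |>.mp
  rw [norm_ofReal_sub_mul_exp_sq]
  nlinarith

lemma cos_mem_Ico_of_mem_Ioo {x : ℝ} (hx₀ : 0 < x) (hx : x < Real.pi / 2) :
    0 ≤ Real.cos x ∧ Real.cos x < 1 := by
  refine ⟨Real.cos_nonneg_of_mem_Icc ⟨by linarith, hx.le⟩, ?_⟩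
  simpa using Real.cos_lt_cos_of_nonneg_of_le_pi le_rfl (by linarith [Real.pi_pos]) hx₀

lemma cos_le_cos_of_abs_le {θ a : ℝ} (hθ : |θ| ≤ a) (ha : a ≤ Real.pi) :
    Real.cos a ≤ Real.cos θ := by
  rw [← Real.cos_abs θ]
  exact Real.cos_le_cos_of_nonneg_of_le_pi (abs_nonneg θ) ha hθ

theorem feasibility_small_alpha (n : ℕ) (hn : 1 ≤ n) (α : ℝ) (hα : 0 < α)
    (hdist : 4 * n * α < Real.pi) (θ : ℝ) (hθ : |θ| ≤ 2 * α) :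
    0 ≤ (1 - Real.cos (2 * n * α) ^ 2) / (2 * (1 - Real.cos (2 * n * α) * Real.cos (2 * α))) ∧
    (1 - Real.cos (2 * n * α) ^ 2) / (2 * (1 - Real.cos (2 * n * α) * Real.cos (2 * α))) ≤ 1 ∧
    ‖(Real.cos (2 * n * α) : ℂ) -
        (((1 - Real.cos (2 * n * α) ^ 2) /
          (2 * (1 - Real.cos (2 * n * α) * Real.cos (2 * α))) : ℝ) : ℂ) *
        Complex.exp (Complex.I * θ)‖
      ≤ 1 - (1 - Real.cos (2 * n * α) ^ 2) /
          (2 * (1 - Real.cos (2 * n * α) * Real.cos (2 * α))) := by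
  have hn' : (1 : ℝ) ≤ n := by exact_mod_cast hn
  obtain ⟨hc₀, hc₁⟩ := cos_mem_Ico_of_mem_Ioo (x := 2 * n * α) (by positivity) (by linarith)
  have hbθ : Real.cos (2 * α) ≤ Real.cos θ := cos_le_cos_of_abs_le hθ (by nlinarith)
  have hb : Real.cos (2 * α) ≤ 1 := Real.cos_le_one _
  exact ⟨retrievalSuccessProb_nonneg hc₀ hc₁ hb, retrievalSuccessProb_le_one hc₀ hc₁ hb,
    norm_sub_retrievalSuccessProb_mul_exp_le hc₀ hc₁ hbθ⟩
end
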